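/- arXiv:1908.10457 — 4 statements merged into one kernel-verified Lean document; each statement's English description precedes it below -/
import Mathlib

section
/- If G and H are finite simple graphs with im(G) = t and im(H) = r, then im(G∘H) ≥ t·r, where G∘H is the lexicographic product. -/
set_option linter.unusedVariables false

open SimpleGraph

/-- A graph `G` has a `K_t`-immersion: `t` terminal vertices (injective `φ`) together with
pairwise edge-disjoint paths joining every pair of terminals. -/
def HasCliqueImmersion {V : Type*} (G : SimpleGraph V) (t : ℕ) : Prop :=
  ∃ φ : Fin t → V, Function.Injective φ ∧
    ∃ P : ∀ i j : Fin t, G.Walk (φ i) (φ j),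
      (∀ i j : Fin t, i < j → (P i j).IsPath) ∧
      (∀ i j k l : Fin t, i < j → k < l → (i, j) ≠ (k, l) →
        List.Disjoint (P i j).edges (P k l).edges)

/-- The immersion number of `G`: the largest `t` such that `G` has a `K_t`-immersion. -/
noncomputable def immersionNumber {V : Type*} (G : SimpleGraph V) : ℕ :=
  sSup {t | HasCliqueImmersion G t}

/-- Lexicographic product. -/
def lexProd {α β : Type*} (G : SimpleGraph α) (H : SimpleGraph β) :
    SimpleGraph (α × β) where
  Adj x y := G.Adj x.1 y.1 ∨ (x.1 = y.1 ∧ H.Adj x.2 y.2)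
  symm := ⟨by rintro x y (h | ⟨h1, h2⟩); exact Or.inl h.symm; exact Or.inr ⟨h1.symm, h2.symm⟩⟩
  loopless := ⟨by rintro x (h | ⟨-, h⟩) <;> exact h.ne rfl⟩

/-- Direct (tensor) product. -/
def directProd {α β : Type*} (G : SimpleGraph α) (H : SimpleGraph β) :
    SimpleGraph (α × β) where
  Adj x y := G.Adj x.1 y.1 ∧ H.Adj x.2 y.2
  symm := ⟨by rintro x y ⟨h1, h2⟩; exact ⟨h1.symm, h2.symm⟩⟩
  loopless := ⟨by rintro x ⟨h, -⟩; exact h.ne rfl⟩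

/-- Strong product. -/
def strongProd {α β : Type*} (G : SimpleGraph α) (H : SimpleGraph β) :
    SimpleGraph (α × β) :=
  (G.boxProd H) ⊔ (directProd G H)

/-- Cartesian power: `d`-fold Cartesian (box) product of `G` with itself. -/
def boxPow {α : Type*} (G : SimpleGraph α) (d : ℕ) : SimpleGraph (Fin d → α) where
  Adj x y := ∃ i, G.Adj (x i) (y i) ∧ ∀ j, j ≠ i → x j = y j
  symm := ⟨by rintro x y ⟨i, h, hj⟩; exact ⟨i, h.symm, fun j hji => (hj j hji).symm⟩⟩
  loopless := ⟨by rintro x ⟨i, h, -⟩; exact h.ne rfl⟩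

instance {α β : Type*} [DecidableEq α] (G : SimpleGraph α) (H : SimpleGraph β)
    [DecidableRel G.Adj] [DecidableRel H.Adj] : DecidableRel (lexProd G H).Adj :=
  fun x y => inferInstanceAs (Decidable (_ ∨ _))

instance {α β : Type*} (G : SimpleGraph α) (H : SimpleGraph β)
    [DecidableRel G.Adj] [DecidableRel H.Adj] : DecidableRel (directProd G H).Adj :=
  fun x y => inferInstanceAs (Decidable (_ ∧ _))

instance {α β : Type*} [DecidableEq α] [DecidableEq β] (G : SimpleGraph α) (H : SimpleGraph β)
    [DecidableRel G.Adj] [DecidableRel H.Adj] : DecidableRel (G.boxProd H).Adj :=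
  fun x y => decidable_of_iff _ (SimpleGraph.boxProd_adj).symm

instance {α β : Type*} [DecidableEq α] [DecidableEq β] (G : SimpleGraph α) (H : SimpleGraph β)
    [DecidableRel G.Adj] [DecidableRel H.Adj] : DecidableRel (strongProd G H).Adj :=
  fun x y => inferInstanceAs (Decidable (_ ∨ _))

namespace LexImm

variable {α β : Type*} {G : SimpleGraph α} {H : SimpleGraph β}

/-- embedding of a fiber -/
abbrev fiberEmb (G : SimpleGraph α) (H : SimpleGraph β) (g : α) : H →g lexProd G H :=
  ⟨fun b => (g, b), fun h => Or.inr ⟨rfl, h⟩⟩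

lemma lexProd_adj_inl (H : SimpleGraph β) {g g' : α} (h : G.Adj g g') {b b' : β} :
    (lexProd G H).Adj (g, b) (g', b') := Or.inl h

def liftWalk (H : SimpleGraph β) :
    {g g' : α} → (w : G.Walk g g') → (f : ℕ → β) →
      (lexProd G H).Walk (g, f 0) (g', f w.length)
  | _, _, .nil, _ => .nil
  | _, _, .cons h w, f =>
      .cons (lexProd_adj_inl H h) (liftWalk H w (fun n => f (n + 1)))

lemma liftWalk_edges_cons {u v w : α} (h : G.Adj u v) (p : G.Walk v w) (f : ℕ → β) :
    (liftWalk H (.cons h p) f).edges =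
      s((u, f 0), (v, f 1)) :: (liftWalk H p (fun n => f (n + 1))).edges := rfl

lemma liftWalk_support_map {g g' : α} (w : G.Walk g g') (f : ℕ → β) :
    ((liftWalk H w f).support.map Prod.fst) = w.support := by
  induction w generalizing f with
  | nil => simp [liftWalk]
  | cons h w ih => simp [liftWalk, ih]

lemma liftWalk_isPath {g g' : α} {w : G.Walk g g'} (hw : w.IsPath) (f : ℕ → β) :
    (liftWalk H w f).IsPath := by
  rw [SimpleGraph.Walk.isPath_def] at hw ⊢
  exact List.Nodup.of_map Prod.fst (by rw [liftWalk_support_map]; exact hw)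

lemma mem_liftWalk_edges {g g' : α} {w : G.Walk g g'} {f : ℕ → β} {e : Sym2 (α × β)} :
    e ∈ (liftWalk H w f).edges ↔
      ∃ u, u < w.length ∧
        e = s((w.getVert u, f u), (w.getVert (u + 1), f (u + 1))) := by
  induction w generalizing f with
  | nil => simp [liftWalk]
  | cons h w ih =>
    simp only [liftWalk_edges_cons, List.mem_cons, ih]
    constructor
    · rintro (rfl | ⟨u, hu, rfl⟩)
      · exact ⟨0, by simp [SimpleGraph.Walk.getVert_cons_succ], by
          simp [SimpleGraph.Walk.getVert_cons_succ]⟩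
      · exact ⟨u + 1, by simpa using hu, by
          simp [SimpleGraph.Walk.getVert_cons_succ]⟩
    · rintro ⟨u, hu, rfl⟩
      cases u with
      | zero => left; simp [SimpleGraph.Walk.getVert_cons_succ]
      | succ u =>
        right
        exact ⟨u, by simp [SimpleGraph.Walk.length_cons] at hu; omega, by simp [SimpleGraph.Walk.getVert_cons_succ]⟩

lemma edges_getElem {g g' : α} (w : G.Walk g g') (u : ℕ) (h : u < w.length) :
    w.edges[u]'(by rw [SimpleGraph.Walk.length_edges]; exact h)
      = s(w.getVert u, w.getVert (u + 1)) := by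
  induction w generalizing u with
  | nil => simp at h
  | cons hadj w ih =>
    cases u with
    | zero => simp [SimpleGraph.Walk.getVert_cons_succ]
    | succ u =>
      simp only [SimpleGraph.Walk.edges_cons, List.getElem_cons_succ,
        SimpleGraph.Walk.getVert_cons_succ]
      exact ih u (by simpa using h)

lemma step_mem_edges {g g' : α} (w : G.Walk g g') {u : ℕ} (h : u < w.length) :
    s(w.getVert u, w.getVert (u + 1)) ∈ w.edges := by
  rw [← edges_getElem w u h]; exact List.getElem_mem _

lemma step_inj_of_trail {g g' : α} {w : G.Walk g g'} (hw : w.IsTrail) {u v : ℕ}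
    (hu : u < w.length) (hv : v < w.length)
    (h : s(w.getVert u, w.getVert (u + 1)) = s(w.getVert v, w.getVert (v + 1))) :
    u = v := by
  have hnd := hw.edges_nodup
  have h1 := edges_getElem w u hu
  have h2 := edges_getElem w v hv
  rw [← h1, ← h2] at h
  exact (List.Nodup.getElem_inj_iff hnd).1 h

end LexImm


namespace LexImm

section Main

variable {α β : Type*} {t r : ℕ} {G : SimpleGraph α} {H : SimpleGraph β}
variable (φG : Fin t → α) (φH : Fin r → β)

/-- decode an index of `Fin (t*r)` into a pair. -/
def dec (t r : ℕ) (a : Fin (t * r)) : Fin t × Fin r := finProdFinEquiv.symm a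

lemma dec_injective : Function.Injective (dec t r) :=
  finProdFinEquiv.symm.injective

/-- the terminal map -/
abbrev psi (a : Fin (t * r)) : α × β := (φG (dec t r a).1, φH (dec t r a).2)

lemma psi_injective (hG : Function.Injective φG) (hH : Function.Injective φH) :
    Function.Injective (psi φG φH) := by
  intro a b h
  rw [psi, psi, Prod.mk.injEq] at h
  apply dec_injective
  exact Prod.ext (hG h.1) (hH h.2)

/-- the sequence of second coordinates used along a cross path -/
def fseq (k : ℕ) (j j' : Fin r) (a : ℕ) : β :=
  if a = 0 then φH j else if a = k then φH j' else
    if a % 2 = 1 then φH (j + j') else φH j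

lemma fseq_inj (hφH : Function.Injective φH) [NeZero r] {k u : ℕ} (hu : u < k)
    {j1 j1' j2 j2' : Fin r}
    (h1 : fseq φH k j1 j1' u = fseq φH k j2 j2' u)
    (h2 : fseq φH k j1 j1' (u + 1) = fseq φH k j2 j2' (u + 1)) :
    j1 = j2 ∧ j1' = j2' := by
  rcases eq_or_ne u 0 with rfl | hu0
  · have e1 : j1 = j2 := hφH (by simpa [fseq] using h1)
    rcases eq_or_ne k (0 + 1) with rfl | hk1
    · refine ⟨e1, hφH ?_⟩
      simpa [fseq] using h2
    · have e2 : j1 + j1' = j2 + j2' := hφH (by simpa [fseq, Ne.symm hk1] using h2)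
      rw [e1] at e2
      exact ⟨e1, add_left_cancel e2⟩
  · have hu1 : u + 1 ≠ 0 := Nat.succ_ne_zero u
    rcases eq_or_ne k (u + 1) with rfl | hk1
    · have e2 : j1' = j2' := hφH (by simpa [fseq, hu1] using h2)
      refine ⟨?_, e2⟩
      by_cases hp : u % 2 = 1
      · have e1 : j1 + j1' = j2 + j2' := hφH (by simpa [fseq, hu0, hu.ne, hp] using h1)
        rw [e2] at e1
        exact add_right_cancel e1
      · exact hφH (by simpa [fseq, hu0, hu.ne, hp] using h1)
    · by_cases hp : u % 2 = 1
      · have hp2 : ¬((u + 1) % 2 = 1) := by omega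
        have e1 : j1 + j1' = j2 + j2' := hφH (by simpa [fseq, hu0, hu.ne, hp] using h1)
        have e2 : j1 = j2 := hφH (by simpa [fseq, hu1, Ne.symm hk1, hp2] using h2)
        rw [e2] at e1
        exact ⟨e2, add_left_cancel e1⟩
      · have hp2 : (u + 1) % 2 = 1 := by omega
        have e1 : j1 = j2 := hφH (by simpa [fseq, hu0, hu.ne, hp] using h1)
        have e2 : j1 + j1' = j2 + j2' := hφH (by simpa [fseq, hu1, Ne.symm hk1, hp2] using h2)
        rw [e1] at e2
        exact ⟨e1, add_left_cancel e2⟩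

variable (PG : ∀ i j : Fin t, G.Walk (φG i) (φG j))
variable (PH : ∀ i j : Fin r, H.Walk (φH i) (φH j))

variable (H) in
/-- the cross walk joining terminals in distinct fibers -/
def crossW (hGinj : Function.Injective φG) {i i' : Fin t} (hne : i ≠ i') (j j' : Fin r) :
    (lexProd G H).Walk (φG i, φH j) (φG i', φH j') :=
  (liftWalk H (PG i i') (fseq φH (PG i i').length j j')).copy
    (by simp [fseq])
    (by
      have hk : (PG i i').length ≠ 0 := fun h =>
        hne (hGinj (SimpleGraph.Walk.eq_of_length_eq_zero h))
      simp [fseq, hk])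

lemma mem_crossW_edges (hGinj : Function.Injective φG) {i i' : Fin t} (hne : i ≠ i')
    (j j' : Fin r) {e : Sym2 (α × β)} :
    e ∈ (crossW H φG φH PG hGinj hne j j').edges ↔
      ∃ u, u < (PG i i').length ∧
        e = s(((PG i i').getVert u, fseq φH (PG i i').length j j' u),
              ((PG i i').getVert (u + 1), fseq φH (PG i i').length j j' (u + 1))) := by
  rw [crossW, SimpleGraph.Walk.edges_copy, mem_liftWalk_edges]

variable (G) in
/-- the fiber walk joining terminals in the same fiber -/
def fiberW (i : Fin t) (j j' : Fin r) :
    (lexProd G H).Walk (φG i, φH j) (φG i, φH j') :=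
  (PH j j').map (fiberEmb G H (φG i))

variable (H) in
/-- the full path system -/
def P (hGinj : Function.Injective φG) (a b : Fin (t * r)) :
    (lexProd G H).Walk (psi φG φH a) (psi φG φH b) :=
  if h1 : (dec t r a).1 < (dec t r b).1 then
    crossW H φG φH PG hGinj h1.ne (dec t r a).2 (dec t r b).2
  else if h2 : (dec t r b).1 < (dec t r a).1 then
    (crossW H φG φH PG hGinj h2.ne (dec t r b).2 (dec t r a).2).reverse
  else if h3 : (dec t r a).2 < (dec t r b).2 then
    (fiberW G φG φH PH (dec t r a).1 (dec t r a).2 (dec t r b).2).copy rfl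
      (by
        have hq : (dec t r a).1 = (dec t r b).1 :=
          le_antisymm (not_lt.1 h2) (not_lt.1 h1)
        rw [psi, hq])
  else if h4 : (dec t r b).2 < (dec t r a).2 then
    ((fiberW G φG φH PH (dec t r b).1 (dec t r b).2 (dec t r a).2).reverse).copy
      (by
        have hq : (dec t r a).1 = (dec t r b).1 :=
          le_antisymm (not_lt.1 h2) (not_lt.1 h1)
        rw [psi, hq]) rfl
  else
    SimpleGraph.Walk.nil.copy rfl (congrArg (psi φG φH) (dec_injective (Prod.ext
      (le_antisymm (not_lt.1 h2) (not_lt.1 h1))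
      (le_antisymm (not_lt.1 h4) (not_lt.1 h3)))))

lemma P_isPath (hGinj : Function.Injective φG) (hHinj : Function.Injective φH)
    (hGpath : ∀ i j : Fin t, i < j → (PG i j).IsPath)
    (hHpath : ∀ i j : Fin r, i < j → (PH i j).IsPath)
    (a b : Fin (t * r)) :
    (P H φG φH PG PH hGinj a b).IsPath := by
  have hemb : ∀ g : α, Function.Injective (fiberEmb G H g) := by
    intro g x y h
    exact (Prod.mk.injEq _ _ _ _ ▸ h).2
  rw [P]
  split_ifs with h1 h2 h3 h4
  · rw [crossW, SimpleGraph.Walk.isPath_copy]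
    exact liftWalk_isPath (hGpath _ _ h1) _
  · apply SimpleGraph.Walk.IsPath.reverse
    rw [crossW, SimpleGraph.Walk.isPath_copy]
    exact liftWalk_isPath (hGpath _ _ h2) _
  · rw [SimpleGraph.Walk.isPath_copy, fiberW]
    exact SimpleGraph.Walk.map_isPath_of_injective (hemb _) (hHpath _ _ h3)
  · rw [SimpleGraph.Walk.isPath_copy]
    apply SimpleGraph.Walk.IsPath.reverse
    rw [fiberW]
    exact SimpleGraph.Walk.map_isPath_of_injective (hemb _) (hHpath _ _ h4)
  · rw [SimpleGraph.Walk.isPath_copy]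
    exact SimpleGraph.Walk.IsPath.nil

lemma mem_P_edges (hGinj : Function.Injective φG) {a b : Fin (t * r)} (hab : a ≠ b)
    {e : Sym2 (α × β)} (he : e ∈ (P H φG φH PG PH hGinj a b).edges) :
    (∃ (i i' : Fin t) (j j' : Fin r) (u : ℕ), i < i' ∧ u < (PG i i').length ∧
      (((i, j) = dec t r a ∧ (i', j') = dec t r b) ∨
        ((i, j) = dec t r b ∧ (i', j') = dec t r a)) ∧
      e = s(((PG i i').getVert u, fseq φH (PG i i').length j j' u),
            ((PG i i').getVert (u + 1), fseq φH (PG i i').length j j' (u + 1))))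
  ∨ (∃ (i : Fin t) (j j' : Fin r) (e' : Sym2 β), j < j' ∧
      (((i, j) = dec t r a ∧ (i, j') = dec t r b) ∨
        ((i, j) = dec t r b ∧ (i, j') = dec t r a)) ∧
      e' ∈ (PH j j').edges ∧ e = Sym2.map (fiberEmb G H (φG i)) e') := by
  rw [P] at he
  split_ifs at he with h1 h2 h3 h4
  · rw [mem_crossW_edges] at he
    obtain ⟨u, hu, rfl⟩ := he
    exact Or.inl ⟨_, _, _, _, u, h1, hu, Or.inl ⟨rfl, rfl⟩, rfl⟩
  · rw [SimpleGraph.Walk.edges_reverse, List.mem_reverse, mem_crossW_edges] at he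
    obtain ⟨u, hu, rfl⟩ := he
    exact Or.inl ⟨_, _, _, _, u, h2, hu, Or.inr ⟨rfl, rfl⟩, rfl⟩
  · rw [SimpleGraph.Walk.edges_copy, fiberW, SimpleGraph.Walk.edges_map] at he
    obtain ⟨e', he', rfl⟩ := List.mem_map.1 he
    have hq : (dec t r a).1 = (dec t r b).1 := le_antisymm (not_lt.1 h2) (not_lt.1 h1)
    exact Or.inr ⟨(dec t r a).1, _, _, e', h3,
      Or.inl ⟨rfl, Prod.ext hq rfl⟩, he', rfl⟩
  · rw [SimpleGraph.Walk.edges_copy, SimpleGraph.Walk.edges_reverse, List.mem_reverse,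
      fiberW, SimpleGraph.Walk.edges_map] at he
    obtain ⟨e', he', rfl⟩ := List.mem_map.1 he
    have hq : (dec t r a).1 = (dec t r b).1 := le_antisymm (not_lt.1 h2) (not_lt.1 h1)
    exact Or.inr ⟨(dec t r b).1, _, _, e', h4,
      Or.inr ⟨rfl, Prod.ext hq.symm rfl⟩, he', rfl⟩
  · exact absurd (dec_injective (Prod.ext
      (le_antisymm (not_lt.1 h2) (not_lt.1 h1))
      (le_antisymm (not_lt.1 h4) (not_lt.1 h3)))) hab

lemma param_eq {a b c d : Fin (t * r)} (hab : a < b) (hcd : c < d)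
    {X Y : Fin t × Fin r}
    (h1 : (X = dec t r a ∧ Y = dec t r b) ∨ (X = dec t r b ∧ Y = dec t r a))
    (h2 : (X = dec t r c ∧ Y = dec t r d) ∨ (X = dec t r d ∧ Y = dec t r c)) :
    a = c ∧ b = d := by
  obtain ⟨e1, e2⟩ | ⟨e1, e2⟩ : (a = c ∧ b = d) ∨ (a = d ∧ b = c) := by
    rcases h1 with ⟨hx, hy⟩ | ⟨hx, hy⟩ <;> rcases h2 with ⟨hx', hy'⟩ | ⟨hx', hy'⟩
    all_goals first
      | exact Or.inl ⟨dec_injective (hx.symm.trans hx'), dec_injective (hy.symm.trans hy')⟩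
      | exact Or.inl ⟨dec_injective (hy.symm.trans hy'), dec_injective (hx.symm.trans hx')⟩
      | exact Or.inr ⟨dec_injective (hx.symm.trans hx'), dec_injective (hy.symm.trans hy')⟩
      | exact Or.inr ⟨dec_injective (hy.symm.trans hy'), dec_injective (hx.symm.trans hx')⟩
  · exact ⟨e1, e2⟩
  · exact absurd hab (by rw [e1, e2]; exact lt_asymm hcd)

lemma fiberEmb_apply (G : SimpleGraph α) (H : SimpleGraph β) (g : α) (b : β) :
    fiberEmb G H g b = (g, b) := rfl

lemma proj_fiber (G : SimpleGraph α) (H : SimpleGraph β) (g : α) (e' : Sym2 β) :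
    Sym2.map Prod.fst (Sym2.map (fiberEmb G H g) e') = s(g, g) := by
  induction e' using Sym2.ind with
  | _ x y => simp [Sym2.map_pair_eq, fiberEmb_apply]

lemma fiber_eq (G : SimpleGraph α) (H : SimpleGraph β) {g1 g2 : α} {e1 e2 : Sym2 β}
    (h : Sym2.map (fiberEmb G H g1) e1 = Sym2.map (fiberEmb G H g2) e2) :
    g1 = g2 ∧ e1 = e2 := by
  induction e1 using Sym2.ind with
  | _ x1 y1 =>
    induction e2 using Sym2.ind with
    | _ x2 y2 =>
      simp only [Sym2.map_pair_eq, fiberEmb_apply] at h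
      rw [Sym2.eq_iff] at h
      rcases h with ⟨hA, hB⟩ | ⟨hA, hB⟩
      · exact ⟨congrArg Prod.fst hA,
          by rw [Sym2.eq_iff]; exact Or.inl ⟨congrArg Prod.snd hA, congrArg Prod.snd hB⟩⟩
      · exact ⟨congrArg Prod.fst hA,
          by rw [Sym2.eq_iff]; exact Or.inr ⟨congrArg Prod.snd hA, congrArg Prod.snd hB⟩⟩

lemma P_disjoint [NeZero r] (hGinj : Function.Injective φG) (hHinj : Function.Injective φH)
    (hGpath : ∀ i j : Fin t, i < j → (PG i j).IsPath)
    (hGdisj : ∀ i j k l : Fin t, i < j → k < l → (i, j) ≠ (k, l) →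
      List.Disjoint (PG i j).edges (PG k l).edges)
    (hHdisj : ∀ i j k l : Fin r, i < j → k < l → (i, j) ≠ (k, l) →
      List.Disjoint (PH i j).edges (PH k l).edges)
    {a b c d : Fin (t * r)} (hab : a < b) (hcd : c < d) (hne : (a, b) ≠ (c, d)) :
    List.Disjoint (P H φG φH PG PH hGinj a b).edges (P H φG φH PG PH hGinj c d).edges := by
  intro e he1 he2
  rcases mem_P_edges φG φH PG PH hGinj hab.ne he1 with
    ⟨i1, i1', j1, j1', u, hii1, hu, hpar1, heq1⟩ | ⟨i1, j1, j1', e1, hjj1, hpar1, he1', heq1⟩ <;>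
  rcases mem_P_edges φG φH PG PH hGinj hcd.ne he2 with
    ⟨i2, i2', j2, j2', v, hii2, hv, hpar2, heq2⟩ | ⟨i2, j2, j2', e2, hjj2, hpar2, he2', heq2⟩
  · -- cross / cross
    subst heq1
    by_cases hsame : (i1, i1') = (i2, i2')
    · obtain ⟨ei, ei'⟩ := Prod.mk.injEq .. ▸ hsame
      subst ei; subst ei'
      have hproj : s((PG i1 i1').getVert u, (PG i1 i1').getVert (u + 1)) =
          s((PG i1 i1').getVert v, (PG i1 i1').getVert (v + 1)) := by
        have := congrArg (Sym2.map Prod.fst) heq2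
        simpa [Sym2.map_pair_eq] using this
      have huv : u = v := step_inj_of_trail (hGpath _ _ hii1).isTrail hu hv hproj
      subst huv
      have hadj := (PG i1 i1').adj_getVert_succ hu
      rw [Sym2.eq_iff] at heq2
      rcases heq2 with ⟨hA, hB⟩ | ⟨hA, hB⟩
      · have hf1 : fseq φH (PG i1 i1').length j1 j1' u =
            fseq φH (PG i1 i1').length j2 j2' u := congrArg Prod.snd hA
        have hf2 : fseq φH (PG i1 i1').length j1 j1' (u + 1) =
            fseq φH (PG i1 i1').length j2 j2' (u + 1) := congrArg Prod.snd hB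
        obtain ⟨ej, ej'⟩ := fseq_inj φH hHinj hu hf1 hf2
        subst ej; subst ej'
        exact hne (Prod.ext_iff.2 (param_eq hab hcd hpar1 hpar2))
      · exact hadj.ne (congrArg Prod.fst hA)
    · have hproj : s((PG i1 i1').getVert u, (PG i1 i1').getVert (u + 1)) =
          s((PG i2 i2').getVert v, (PG i2 i2').getVert (v + 1)) := by
        have := congrArg (Sym2.map Prod.fst) heq2
        simpa [Sym2.map_pair_eq] using this
      exact hGdisj _ _ _ _ hii1 hii2 hsame (step_mem_edges _ hu)
        (by rw [hproj]; exact step_mem_edges _ hv)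
  · -- cross / fiber
    subst heq1
    have hproj : s((PG i1 i1').getVert u, (PG i1 i1').getVert (u + 1)) =
        s(φG i2, φG i2) := by
      have := congrArg (Sym2.map Prod.fst) heq2
      simpa [Sym2.map_pair_eq, proj_fiber] using this
    have hadj := (PG i1 i1').adj_getVert_succ hu
    rw [Sym2.eq_iff] at hproj
    rcases hproj with ⟨hA, hB⟩ | ⟨hA, hB⟩ <;> exact hadj.ne (hA.trans hB.symm)
  · -- fiber / cross
    subst heq1
    have hproj : s((PG i2 i2').getVert v, (PG i2 i2').getVert (v + 1)) =
        s(φG i1, φG i1) := by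
      have := congrArg (Sym2.map Prod.fst) heq2.symm
      simpa [Sym2.map_pair_eq, proj_fiber] using this
    have hadj := (PG i2 i2').adj_getVert_succ hv
    rw [Sym2.eq_iff] at hproj
    rcases hproj with ⟨hA, hB⟩ | ⟨hA, hB⟩ <;> exact hadj.ne (hA.trans hB.symm)
  · -- fiber / fiber
    subst heq1
    obtain ⟨hg, he12⟩ := fiber_eq G H heq2
    have hi : i1 = i2 := hGinj hg
    subst hi
    by_cases hsame : (j1, j1') = (j2, j2')
    · obtain ⟨ej, ej'⟩ := Prod.mk.injEq .. ▸ hsame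
      subst ej; subst ej'
      exact hne (Prod.ext_iff.2 (param_eq hab hcd hpar1 hpar2))
    · exact hHdisj _ _ _ _ hjj1 hjj2 hsame he1' (he12 ▸ he2')

end Main

lemma hasCliqueImmersion_lexProd {α β : Type*} {G : SimpleGraph α} {H : SimpleGraph β}
    {t r : ℕ} [NeZero r]
    (hG : HasCliqueImmersion G t) (hH : HasCliqueImmersion H r) :
    HasCliqueImmersion (lexProd G H) (t * r) := by
  obtain ⟨φG, hGinj, PG, hGpath, hGdisj⟩ := hG
  obtain ⟨φH, hHinj, PH, hHpath, hHdisj⟩ := hH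
  exact ⟨psi φG φH, psi_injective φG φH hGinj hHinj, P H φG φH PG PH hGinj,
    fun a b _ => P_isPath φG φH PG PH hGinj hHinj hGpath hHpath a b,
    fun a b c d hab hcd hne =>
      P_disjoint φG φH PG PH hGinj hHinj hGpath hGdisj hHdisj hab hcd hne⟩

lemma hasCliqueImmersion_zero {V : Type*} (G : SimpleGraph V) :
    HasCliqueImmersion G 0 :=
  ⟨Fin.elim0, Function.injective_of_subsingleton _,
    fun i _ => i.elim0, fun i => i.elim0, fun i => i.elim0⟩

lemma bddAbove_hasCliqueImmersion {V : Type*} [Fintype V] (G : SimpleGraph V) :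
    BddAbove {n | HasCliqueImmersion G n} := by
  refine ⟨Fintype.card V, fun n hn => ?_⟩
  obtain ⟨φ, hφ, -⟩ := hn
  simpa using Fintype.card_le_of_injective φ hφ

end LexImm

theorem immersion_lexProd_ge {α β : Type*} [Fintype α] [Fintype β]
    (G : SimpleGraph α) (H : SimpleGraph β) (t r : ℕ)
    (hG : immersionNumber G = t) (hH : immersionNumber H = r) :
    t * r ≤ immersionNumber (lexProd G H) := by
  rcases Nat.eq_zero_or_pos (t * r) with h0 | hpos
  · simp [h0]
  · have hr : r ≠ 0 := by
      rintro rfl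
      simp at hpos
    haveI : NeZero r := ⟨hr⟩
    have hGt : HasCliqueImmersion G t := by
      rw [← hG, immersionNumber]
      exact Nat.sSup_mem ⟨0, by exact LexImm.hasCliqueImmersion_zero G⟩
        (LexImm.bddAbove_hasCliqueImmersion G)
    have hHr : HasCliqueImmersion H r := by
      rw [← hH, immersionNumber]
      exact Nat.sSup_mem ⟨0, by exact LexImm.hasCliqueImmersion_zero H⟩
        (LexImm.bddAbove_hasCliqueImmersion H)
    have hkey := LexImm.hasCliqueImmersion_lexProd hGt hHr
    rw [immersionNumber]
    exact le_csSup (LexImm.bddAbove_hasCliqueImmersion _) hkey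
end

section
/- For all n ≥ 3 and r ≥ 1, the immersion number of the lexicographic product C_n∘K_r equals 3r, where C_n is the cycle on n vertices. -/
set_option linter.unusedVariables false

open SimpleGraph

namespace ImmAux
set_option linter.unusedSectionVars false
open SimpleGraph
open Fin.NatCast

variable {V : Type*} {G : SimpleGraph V}

def walkOfFn (G : SimpleGraph V) (v : ℕ → V) :
    (m : ℕ) → (∀ i, i < m → G.Adj (v i) (v (i+1))) → G.Walk (v 0) (v m)
  | 0, _ => Walk.nil
  | m+1, h => (walkOfFn G v m (fun i hi => h i (by omega))).concat (h m (by omega))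

theorem edges_walkOfFn (v : ℕ → V) (m : ℕ) (h : ∀ i, i < m → G.Adj (v i) (v (i+1))) :
    (walkOfFn G v m h).edges = (List.range m).map (fun i => s(v i, v (i+1))) := by
  induction m with
  | zero => rfl
  | succ m ih => simp [walkOfFn, Walk.edges_concat, ih, List.range_succ]

theorem support_walkOfFn (v : ℕ → V) (m : ℕ) (h : ∀ i, i < m → G.Adj (v i) (v (i+1))) :
    (walkOfFn G v m h).support = (List.range (m+1)).map v := by
  induction m with
  | zero => rfl
  | succ m ih =>
    rw [walkOfFn, Walk.support_concat, ih]
    simp [List.range_succ]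

theorem isPath_walkOfFn (v : ℕ → V) (m : ℕ) (h : ∀ i, i < m → G.Adj (v i) (v (i+1)))
    (hinj : ∀ i j, i ≤ m → j ≤ m → v i = v j → i = j) : (walkOfFn G v m h).IsPath := by
  rw [Walk.isPath_def, support_walkOfFn]
  refine List.Nodup.map_on ?_ List.nodup_range
  intro i hi j hj hv
  exact hinj i j (by simpa using Nat.lt_succ_iff.mp (List.mem_range.mp hi))
    (by simpa using Nat.lt_succ_iff.mp (List.mem_range.mp hj)) hv

section Construction

variable (n r : ℕ) [NeZero n] [NeZero r]

abbrev LG : SimpleGraph (Fin n × Fin r) :=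
  lexProd (SimpleGraph.cycleGraph n) (⊤ : SimpleGraph (Fin r))

lemma LG_adj {x y : Fin n × Fin r} :
    (LG n r).Adj x y ↔ (cycleGraph n).Adj x.1 y.1 ∨ (x.1 = y.1 ∧ x.2 ≠ y.2) := by
  constructor
  · rintro (h | ⟨h1, h2⟩)
    · exact Or.inl h
    · exact Or.inr ⟨h1, h2⟩
  · rintro (h | ⟨h1, h2⟩)
    · exact Or.inl h
    · exact Or.inr ⟨h1, h2⟩

/-- vertex with column `u` and layer `a` (naturals, cast). -/
def vert (u a : ℕ) : Fin n × Fin r := ((u : Fin n), (a : Fin r))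

/-- terminal placement -/
def tphi (i : Fin (3*r)) : Fin n × Fin r := vert n r (i.val / r) (i.val % r)

/-- the layer function for the long path from `(0,a)` to `(2,b)` going backwards
around the cycle. -/
def lf (a b k : ℕ) : ℕ :=
  if k = 0 then a else if k = n - 2 then b else if k % 2 = 1 then a + b else a

/-- the vertex function for the long path. -/
def lv (a b k : ℕ) : Fin n × Fin r := vert n r ((n - k) % n) (lf n a b k)

lemma fin_natCast_eq_iff {m : ℕ} [NeZero m] {x y : ℕ} :
    (↑x : Fin m) = ↑y ↔ x % m = y % m := by
  rw [Fin.ext_iff]; simp [Fin.val_natCast]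

lemma vert_eq_iff {u a u' a' : ℕ} :
    vert n r u a = vert n r u' a' ↔ u % n = u' % n ∧ a % r = a' % r := by
  rw [vert, vert, Prod.ext_iff, fin_natCast_eq_iff, fin_natCast_eq_iff]

variable {n r}

lemma cyc_adj_of (hn : 3 ≤ n) {u v : ℕ} (hu : u < n) (hv : v < n)
    (h : u + 1 = v ∨ v + 1 = u ∨ (u = 0 ∧ v + 1 = n) ∨ (v = 0 ∧ u + 1 = n)) :
    (cycleGraph n).Adj (↑u) (↑v) := by
  rw [SimpleGraph.cycleGraph_adj']
  have hsub : ∀ x y : ℕ, x < n → y < n → ((↑x - ↑y : Fin n)).val = (x + (n - y)) % n := by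
    intro x y hx hy
    rw [Fin.sub_def]
    simp [Fin.val_natCast, Nat.mod_eq_of_lt hx, Nat.mod_eq_of_lt hy, Nat.add_comm]
  rcases h with h | h | ⟨h1, h2⟩ | ⟨h1, h2⟩
  · right
    rw [hsub v u hv hu]
    have : v + (n - u) = n + 1 := by omega
    rw [this, Nat.add_mod_left]
    exact Nat.mod_eq_of_lt (by omega)
  · left
    rw [hsub u v hu hv]
    have : u + (n - v) = n + 1 := by omega
    rw [this, Nat.add_mod_left]
    exact Nat.mod_eq_of_lt (by omega)
  · left
    rw [hsub u v hu hv]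
    have : u + (n - v) = 1 := by omega
    rw [this]
    exact Nat.mod_eq_of_lt (by omega)
  · right
    rw [hsub v u hv hu]
    have : v + (n - u) = 1 := by omega
    rw [this]
    exact Nat.mod_eq_of_lt (by omega)

lemma tphi_val_div_lt (hr : 1 ≤ r) (i : Fin (3*r)) : i.val / r < 3 :=
  Nat.div_lt_of_lt_mul (by have := i.isLt; omega)

lemma tphi_inj (hn : 3 ≤ n) (hr : 1 ≤ r) : Function.Injective (tphi n r) := by
  intro i j h
  rw [tphi, tphi, vert_eq_iff] at h
  obtain ⟨h1, h2⟩ := h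
  rw [Nat.mod_eq_of_lt (lt_of_lt_of_le (tphi_val_div_lt hr i) hn),
    Nat.mod_eq_of_lt (lt_of_lt_of_le (tphi_val_div_lt hr j) hn)] at h1
  rw [Nat.mod_eq_of_lt (Nat.mod_lt _ (by omega)), Nat.mod_eq_of_lt (Nat.mod_lt _ (by omega))] at h2
  have : i.val = j.val := by
    have hi := Nat.div_add_mod i.val r
    have hj := Nat.div_add_mod j.val r
    rw [← h1, ← h2] at hj
    omega
  exact Fin.ext this

lemma lv_zero (a b : ℕ) : lv n r a b 0 = vert n r 0 a := by
  rw [lv, lf]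
  simp [Nat.mod_self]

lemma lv_last (hn : 3 ≤ n) (a b : ℕ) : lv n r a b (n-2) = vert n r 2 b := by
  rw [lv, lf, vert_eq_iff]
  have h2 : n - (n - 2) = 2 := by omega
  rw [h2]
  have : ¬ (n - 2 = 0) := by omega
  simp [this]

lemma col_lv_pos (hn : 3 ≤ n) {t : ℕ} (ht : 0 < t) (ht' : t ≤ n - 1) :
    (n - t) % n = n - t := Nat.mod_eq_of_lt (by omega)

/-- adjacency along the long path -/
lemma lv_adj (hn : 3 ≤ n) (a b : ℕ) {k : ℕ} (hk : k < n - 2) :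
    (LG n r).Adj (lv n r a b k) (lv n r a b (k+1)) := by
  rw [LG_adj]
  left
  show (cycleGraph n).Adj (↑((n - k) % n)) (↑((n - (k+1)) % n))
  rcases Nat.eq_zero_or_pos k with hk0 | hk0
  · subst hk0
    have e1 : (n - 0) % n = 0 := by simp [Nat.mod_self]
    have e2 : (n - 1) % n = n - 1 := Nat.mod_eq_of_lt (by omega)
    rw [e1]
    rw [show n - (0+1) = n - 1 by omega, e2]
    exact cyc_adj_of hn (by omega) (by omega) (by right; right; left; omega)
  · have e1 : (n - k) % n = n - k := Nat.mod_eq_of_lt (by omega)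
    have e2 : (n - (k+1)) % n = n - (k+1) := Nat.mod_eq_of_lt (by omega)
    rw [e1, e2]
    exact cyc_adj_of hn (by omega) (by omega) (by right; left; omega)

/-- injectivity of the long-path vertices -/
lemma lv_inj (hn : 3 ≤ n) (a b : ℕ) {s t : ℕ} (hs : s ≤ n - 2) (ht : t ≤ n - 2)
    (h : lv n r a b s = lv n r a b t) : s = t := by
  rw [lv, lv, vert_eq_iff] at h
  have h1 := h.1
  rw [Nat.mod_eq_of_lt (Nat.mod_lt _ (by omega : 0 < n)),
    Nat.mod_eq_of_lt (Nat.mod_lt _ (by omega : 0 < n))] at h1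
  rcases Nat.eq_zero_or_pos s with hs0 | hs0 <;> rcases Nat.eq_zero_or_pos t with ht0 | ht0
  · omega
  · subst hs0
    rw [show (n - 0) % n = 0 by simp [Nat.mod_self], col_lv_pos hn ht0 (by omega)] at h1
    omega
  · subst ht0
    rw [show (n - 0) % n = 0 by simp [Nat.mod_self], col_lv_pos hn hs0 (by omega)] at h1
    omega
  · rw [col_lv_pos hn hs0 (by omega), col_lv_pos hn ht0 (by omega)] at h1
    omega

-- ===== second layer: walk construction =====

lemma triage (hr : 1 ≤ r) (i j : Fin (3*r)) (h2 : ¬ i.val / r = j.val / r)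
    (h3 : ¬ i.val / r + 1 = j.val / r) (h4 : ¬ j.val / r + 1 = i.val / r) :
    (i.val / r = 0 ∧ j.val / r = 2) ∨ (j.val / r = 0 ∧ i.val / r = 2) := by
  have hi := tphi_val_div_lt hr i
  have hj := tphi_val_div_lt hr j
  obtain ⟨A, hA⟩ : ∃ A : ℕ, A = i.val / r := ⟨_, rfl⟩
  obtain ⟨B, hB⟩ : ∃ B : ℕ, B = j.val / r := ⟨_, rfl⟩
  rw [← hA, ← hB] at h2 h3 h4 ⊢
  rw [← hA] at hi
  rw [← hB] at hj
  omega

lemma eq_of_div_mod {r : ℕ} {i k : Fin (3*r)} (h1 : i.val / r = k.val / r)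
    (h2 : i.val % r = k.val % r) : i = k := by
  apply Fin.ext
  have hi := Nat.div_add_mod i.val r
  have hk := Nat.div_add_mod k.val r
  rw [← h1, ← h2] at hk
  omega

lemma adj_same (hn : 3 ≤ n) (hr : 1 ≤ r) {i j : Fin (3*r)} (h : i.val / r = j.val / r)
    (hne : i ≠ j) : (LG n r).Adj (tphi n r i) (tphi n r j) := by
  have h1 : (tphi n r i).1 = (tphi n r j).1 := by
    show ((i.val / r : ℕ) : Fin n) = ((j.val / r : ℕ) : Fin n)
    rw [h]
  rw [LG_adj]
  exact Or.inr ⟨h1, fun hc => hne (tphi_inj hn hr (Prod.ext h1 hc))⟩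

lemma adj_step (hn : 3 ≤ n) (hr : 1 ≤ r) {i j : Fin (3*r)} (h : i.val / r + 1 = j.val / r) :
    (LG n r).Adj (tphi n r i) (tphi n r j) := by
  rw [LG_adj]
  left
  show (cycleGraph n).Adj (↑(i.val / r)) (↑(j.val / r))
  exact cyc_adj_of hn (lt_of_lt_of_le (tphi_val_div_lt hr i) hn)
    (lt_of_lt_of_le (tphi_val_div_lt hr j) hn) (Or.inl h)

lemma lv_zero_eq_tphi (hn : 3 ≤ n) (hr : 1 ≤ r) {i : Fin (3*r)} (h : i.val / r = 0) (b : ℕ) :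
    lv n r (i.val % r) b 0 = tphi n r i := by
  rw [lv_zero, tphi, h]

lemma lv_last_eq_tphi (hn : 3 ≤ n) (hr : 1 ≤ r) {j : Fin (3*r)} (h : j.val / r = 2) (a : ℕ) :
    lv n r a (j.val % r) (n-2) = tphi n r j := by
  rw [lv_last hn, tphi, h]

def Qwalk (hn : 3 ≤ n) (hr : 1 ≤ r) (i j : Fin (3*r)) :
    (LG n r).Walk (tphi n r i) (tphi n r j) :=
  if h1 : i = j then Walk.nil.copy rfl (congrArg _ h1)
  else if h2 : i.val / r = j.val / r then
    Walk.cons (adj_same hn hr h2 h1) Walk.nil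
  else if h3 : i.val / r + 1 = j.val / r then
    Walk.cons (adj_step hn hr h3) Walk.nil
  else if h4 : j.val / r + 1 = i.val / r then
    Walk.cons ((adj_step hn hr h4).symm) Walk.nil
  else if h5 : i.val / r = 0 ∧ j.val / r = 2 then
    (walkOfFn _ (lv n r (i.val % r) (j.val % r)) (n-2)
      (fun k hk => lv_adj hn _ _ hk)).copy (lv_zero_eq_tphi hn hr h5.1 _)
        (lv_last_eq_tphi hn hr h5.2 _)
  else
    have h6 : j.val / r = 0 ∧ i.val / r = 2 := by
      rcases triage hr i j h2 h3 h4 with h | h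
      · exact absurd h h5
      · exact h
    ((walkOfFn _ (lv n r (j.val % r) (i.val % r)) (n-2)
      (fun k hk => lv_adj hn _ _ hk)).copy (lv_zero_eq_tphi hn hr h6.1 _)
        (lv_last_eq_tphi hn hr h6.2 _)).reverse

abbrev EdgeGood (i j : Fin (3*r)) (e : Sym2 (Fin n × Fin r)) : Prop :=
  e = s(tphi n r i, tphi n r j) ∨
  (i.val / r = 0 ∧ j.val / r = 2 ∧
    ∃ t, t + 3 ≤ n ∧ e = s(lv n r (i.val % r) (j.val % r) t, lv n r (i.val % r) (j.val % r) (t+1)))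

lemma Qwalk_edges (hn : 3 ≤ n) (hr : 1 ≤ r) {i j : Fin (3*r)} (hij : i < j) :
    ∀ e ∈ (Qwalk hn hr i j).edges, EdgeGood i j e := by
  intro e he
  have hne : i ≠ j := ne_of_lt hij
  have hle : i.val / r ≤ j.val / r :=
    Nat.div_le_div_right (le_of_lt (show i.val < j.val from hij))
  rw [Qwalk] at he
  split_ifs at he with h1 h2 h3 h4 h5
  · exact absurd h1 hne
  · simp only [Walk.edges_cons, Walk.edges_nil, List.mem_singleton] at he
    exact Or.inl he
  · simp only [Walk.edges_cons, Walk.edges_nil, List.mem_singleton] at he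
    exact Or.inl he
  · rw [← h4] at hle
    omega
  · rw [Walk.edges_copy, edges_walkOfFn] at he
    simp only [List.mem_map, List.mem_range] at he
    obtain ⟨t, ht, rfl⟩ := he
    exact Or.inr ⟨h5.1, h5.2, t, by omega, rfl⟩
  · exfalso
    rcases triage hr i j h2 h3 h4 with h | h
    · exact h5 h
    · rw [h.1, h.2] at hle
      omega

lemma Qwalk_isPath (hn : 3 ≤ n) (hr : 1 ≤ r) {i j : Fin (3*r)} (hij : i < j) :
    (Qwalk hn hr i j).IsPath := by
  have hne : i ≠ j := ne_of_lt hij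
  have hle : i.val / r ≤ j.val / r :=
    Nat.div_le_div_right (le_of_lt (show i.val < j.val from hij))
  rw [Qwalk]
  split_ifs with h1 h2 h3 h4 h5
  · exact absurd h1 hne
  · rw [Walk.isPath_def]
    simp only [Walk.support_cons, Walk.support_nil, List.nodup_cons, List.mem_singleton,
      List.mem_cons, List.not_mem_nil, or_false, List.nodup_nil, and_true]
    exact ⟨fun hc => hne (tphi_inj hn hr hc), by simp⟩
  · rw [Walk.isPath_def]
    simp only [Walk.support_cons, Walk.support_nil, List.nodup_cons, List.mem_singleton,
      List.mem_cons, List.not_mem_nil, or_false, List.nodup_nil, and_true]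
    exact ⟨fun hc => hne (tphi_inj hn hr hc), by simp⟩
  · rw [← h4] at hle
    omega
  · rw [Walk.isPath_copy]
    exact isPath_walkOfFn _ _ _ (fun s t hs ht hst => lv_inj hn _ _ hs ht hst)
  · exfalso
    rcases triage hr i j h2 h3 h4 with h | h
    · exact h5 h
    · rw [h.1, h.2] at hle
      omega


-- ===== layer 3 : uniqueness of edges =====

lemma lf_zero' (a b : ℕ) : lf n a b 0 = a := by simp [lf]

lemma lf_last' (hn : 3 ≤ n) (a b : ℕ) : lf n a b (n-2) = b := by
  rw [lf, if_neg (by omega), if_pos rfl]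

lemma lf_mid_odd {k : ℕ} (h0 : k ≠ 0) (h2 : k ≠ n-2) (ho : k % 2 = 1) (a b : ℕ) :
    lf n a b k = a + b := by
  rw [lf, if_neg h0, if_neg h2, if_pos ho]

lemma lf_mid_even {k : ℕ} (h0 : k ≠ 0) (h2 : k ≠ n-2) (ho : ¬ k % 2 = 1) (a b : ℕ) :
    lf n a b k = a := by
  rw [lf, if_neg h0, if_neg h2, if_neg ho]

lemma mod_inj {x y : ℕ} (hx : x < r) (hy : y < r) (h : x % r = y % r) : x = y := by
  rwa [Nat.mod_eq_of_lt hx, Nat.mod_eq_of_lt hy] at h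

lemma add_cancel_left {a b b' : ℕ} (hb : b < r) (hb' : b' < r)
    (h : (a + b) % r = (a + b') % r) : b = b' :=
  mod_inj hb hb' (Nat.ModEq.add_left_cancel' a h)

lemma add_cancel_right {a a' b : ℕ} (ha : a < r) (ha' : a' < r)
    (h : (a + b) % r = (a' + b) % r) : a = a' :=
  mod_inj ha ha' (Nat.ModEq.add_right_cancel' b h)

lemma lf_cancel (hn : 3 ≤ n) {a b a' b' : ℕ} (ha : a < r) (hb : b < r) (ha' : a' < r)
    (hb' : b' < r) {t : ℕ} (ht : t + 3 ≤ n)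
    (h1 : lf n a b t % r = lf n a' b' t % r)
    (h2 : lf n a b (t+1) % r = lf n a' b' (t+1) % r) : a = a' ∧ b = b' := by
  rcases Nat.eq_zero_or_pos t with rfl | htpos
  · rw [lf_zero', lf_zero'] at h1
    have haa : a = a' := mod_inj ha ha' h1
    subst haa
    by_cases hl : 0 + 1 = n - 2
    · rw [show (0+1:ℕ) = n-2 from hl, lf_last' hn, lf_last' hn] at h2
      exact ⟨rfl, mod_inj hb hb' h2⟩
    · rw [lf_mid_odd (by omega) hl (by omega), lf_mid_odd (by omega) hl (by omega)] at h2
      exact ⟨rfl, add_cancel_left hb hb' h2⟩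
  · have ht2 : t ≠ n - 2 := by omega
    by_cases hl : t + 1 = n - 2
    · rw [hl, lf_last' hn, lf_last' hn] at h2
      have hbb : b = b' := mod_inj hb hb' h2
      subst hbb
      by_cases ho : t % 2 = 1
      · rw [lf_mid_odd (by omega) ht2 ho, lf_mid_odd (by omega) ht2 ho] at h1
        exact ⟨add_cancel_right ha ha' h1, rfl⟩
      · rw [lf_mid_even (by omega) ht2 ho, lf_mid_even (by omega) ht2 ho] at h1
        exact ⟨mod_inj ha ha' h1, rfl⟩
    · have h10 : t + 1 ≠ 0 := by omega
      by_cases ho : t % 2 = 1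
      · have ho' : ¬ (t+1) % 2 = 1 := by omega
        rw [lf_mid_odd (by omega) ht2 ho, lf_mid_odd (by omega) ht2 ho] at h1
        rw [lf_mid_even h10 hl ho', lf_mid_even h10 hl ho'] at h2
        have haa := mod_inj ha ha' h2
        subst haa
        exact ⟨rfl, add_cancel_left hb hb' h1⟩
      · have ho' : (t+1) % 2 = 1 := by omega
        rw [lf_mid_even (by omega) ht2 ho, lf_mid_even (by omega) ht2 ho] at h1
        rw [lf_mid_odd h10 hl ho', lf_mid_odd h10 hl ho'] at h2
        have haa := mod_inj ha ha' h1
        subst haa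
        exact ⟨rfl, add_cancel_left hb hb' h2⟩

lemma colval (hn : 3 ≤ n) (t : ℕ) (ht : t ≤ n - 1) :
    (n - t) % n = if t = 0 then 0 else n - t := by
  rcases Nat.eq_zero_or_pos t with rfl | h
  · simp [Nat.mod_self]
  · rw [if_neg (by omega)]
    exact Nat.mod_eq_of_lt (by omega)

lemma RR (hn : 3 ≤ n) (hr : 1 ≤ r) {a b a' b' : ℕ} (ha : a < r) (hb : b < r) (ha' : a' < r)
    (hb' : b' < r) {t t' : ℕ} (ht : t + 3 ≤ n) (ht' : t' + 3 ≤ n)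
    (he : s(lv n r a b t, lv n r a b (t+1)) = s(lv n r a' b' t', lv n r a' b' (t'+1))) :
    a = a' ∧ b = b' := by
  have mm : ∀ x : ℕ, x % n % n = x % n := fun x => Nat.mod_mod_of_dvd x dvd_rfl
  rw [Sym2.eq_iff] at he
  rcases he with ⟨e1, e2⟩ | ⟨e1, e2⟩
  · rw [lv, lv, vert_eq_iff] at e1 e2
    obtain ⟨c1, l1⟩ := e1
    obtain ⟨c2, l2⟩ := e2
    rw [mm, mm] at c1
    have htt : t = t' := by
      rw [colval hn t (by omega), colval hn t' (by omega)] at c1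
      split_ifs at c1 <;> first | contradiction | omega
    subst htt
    exact lf_cancel hn ha hb ha' hb' ht l1 l2
  · exfalso
    rw [lv, lv, vert_eq_iff] at e1 e2
    have c1 := e1.1
    have c2 := e2.1
    rw [mm, mm] at c1 c2
    rw [colval hn t (by omega), colval hn (t'+1) (by omega)] at c1
    rw [colval hn (t+1) (by omega), colval hn t' (by omega)] at c2
    split_ifs at c1 c2 <;> first | contradiction | omega

lemma LL (hn : 3 ≤ n) (hr : 1 ≤ r) {i j k l : Fin (3*r)} (hij : i < j) (hkl : k < l)
    (he : s(tphi n r i, tphi n r j) = s(tphi n r k, tphi n r l)) : i = k ∧ j = l := by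
  rw [Sym2.eq_iff] at he
  rcases he with ⟨h1, h2⟩ | ⟨h1, h2⟩
  · exact ⟨tphi_inj hn hr h1, tphi_inj hn hr h2⟩
  · exfalso
    have e1 := tphi_inj hn hr h1
    have e2 := tphi_inj hn hr h2
    rw [e2] at hij
    rw [e1] at hij
    exact lt_asymm hij hkl

lemma not_mixed (hn : 3 ≤ n) (hr : 1 ≤ r) {i j k l : Fin (3*r)} (hij : i < j) (hkl : k < l)
    {t : ℕ} (htn : t + 3 ≤ n) (hk0 : k.val / r = 0) (hl2 : l.val / r = 2)
    (he : s(tphi n r i, tphi n r j) =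
      s(lv n r (k.val % r) (l.val % r) t, lv n r (k.val % r) (l.val % r) (t+1))) :
    i = k ∧ j = l := by
  by_cases h4 : 4 ≤ n
  · exfalso
    have mm : ∀ x : ℕ, x % n % n = x % n := fun x => Nat.mod_mod_of_dvd x dvd_rfl
    have divi : i.val / r % n = i.val / r :=
      Nat.mod_eq_of_lt (lt_of_lt_of_le (tphi_val_div_lt hr i) hn)
    have divj : j.val / r % n = j.val / r :=
      Nat.mod_eq_of_lt (lt_of_lt_of_le (tphi_val_div_lt hr j) hn)
    have hi3 := tphi_val_div_lt hr i
    have hj3 := tphi_val_div_lt hr j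
    rw [Sym2.eq_iff] at he
    obtain ⟨A, hA⟩ : ∃ A : ℕ, A = i.val / r := ⟨_, rfl⟩
    obtain ⟨B, hB⟩ : ∃ B : ℕ, B = j.val / r := ⟨_, rfl⟩
    rw [← hA] at divi hi3
    rw [← hB] at divj hj3
    rcases he with ⟨e1, e2⟩ | ⟨e1, e2⟩
    · rw [tphi, lv, vert_eq_iff] at e1 e2
      have c1 := e1.1
      have c2 := e2.1
      rw [← hA, divi, mm, colval hn t (by omega)] at c1
      rw [← hB, divj, mm, colval hn (t+1) (by omega)] at c2
      split_ifs at c1 c2 <;> first | contradiction | omega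
    · rw [tphi, lv, vert_eq_iff] at e1 e2
      have c1 := e1.1
      have c2 := e2.1
      rw [← hA, divi, mm, colval hn (t+1) (by omega)] at c1
      rw [← hB, divj, mm, colval hn t (by omega)] at c2
      split_ifs at c1 c2 <;> first | contradiction | omega
  · have ht0 : t = 0 := by omega
    subst ht0
    have e0 : lv n r (k.val % r) (l.val % r) 0 = tphi n r k := lv_zero_eq_tphi hn hr hk0 _
    have e1 : lv n r (k.val % r) (l.val % r) (0+1) = tphi n r l := by
      rw [show (0+1:ℕ) = n - 2 by omega]
      exact lv_last_eq_tphi hn hr hl2 _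
    rw [e0, e1] at he
    exact LL hn hr hij hkl he

lemma EdgeGood_inj (hn : 3 ≤ n) (hr : 1 ≤ r) {i j k l : Fin (3*r)} (hij : i < j) (hkl : k < l)
    {e : Sym2 (Fin n × Fin r)} (h1 : EdgeGood i j e) (h2 : EdgeGood k l e) :
    i = k ∧ j = l := by
  have hr0 : 0 < r := by omega
  rcases h1 with h1 | ⟨hi0, hj2, t, ht, h1⟩ <;> rcases h2 with h2 | ⟨hk0, hl2, t', ht', h2⟩
  · exact LL hn hr hij hkl (h1.symm.trans h2)
  · exact not_mixed hn hr hij hkl ht' hk0 hl2 (h1.symm.trans h2)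
  · have hsym := not_mixed hn hr hkl hij ht hi0 hj2 (h2.symm.trans h1)
    exact ⟨hsym.1.symm, hsym.2.symm⟩
  · have hab := RR hn hr (Nat.mod_lt _ hr0) (Nat.mod_lt _ hr0) (Nat.mod_lt _ hr0)
      (Nat.mod_lt _ hr0) ht ht' (h1.symm.trans h2)
    exact ⟨eq_of_div_mod (by rw [hi0, hk0]) hab.1, eq_of_div_mod (by rw [hj2, hl2]) hab.2⟩

lemma lower (hn : 3 ≤ n) (hr : 1 ≤ r) : HasCliqueImmersion (LG n r) (3*r) := by
  refine ⟨tphi n r, tphi_inj hn hr, Qwalk hn hr, fun i j h => Qwalk_isPath hn hr h, ?_⟩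
  intro i j k l hij hkl hne e he he'
  obtain ⟨h1, h2⟩ := EdgeGood_inj hn hr hij hkl (Qwalk_edges hn hr hij e he)
    (Qwalk_edges hn hr hkl e he')
  exact hne (by rw [h1, h2])


-- ===== layer 4 : upper bound =====

lemma fin_one_val (hn : 3 ≤ n) : (1 : Fin n).val = 1 := by
  rw [show (1 : Fin n) = ((1 : ℕ) : Fin n) by simp, Fin.val_natCast]
  exact Nat.mod_eq_of_lt (by omega)

lemma cyc_adj_cases (hn : 3 ≤ n) {u v : Fin n} (h : (cycleGraph n).Adj u v) :
    v = u + 1 ∨ v = u - 1 := by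
  rw [SimpleGraph.cycleGraph_adj'] at h
  rcases h with h | h
  · right
    have h1 : u - v = 1 := Fin.ext (by rw [h, fin_one_val hn])
    rw [← h1]
    exact (sub_sub_cancel u v).symm
  · left
    have h1 : v - u = 1 := Fin.ext (by rw [h, fin_one_val hn])
    exact (eq_add_of_sub_eq h1).trans (add_comm 1 u)

lemma tag_inj (c : Fin n) (x x' : Fin n)
    (hx : x = c ∨ x = c + 1 ∨ x = c - 1) (hx' : x' = c ∨ x' = c + 1 ∨ x' = c - 1)
    (h : (if x = c then (2 : Fin 3) else if x = c + 1 then 1 else 0) =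
      (if x' = c then (2 : Fin 3) else if x' = c + 1 then 1 else 0)) : x = x' := by
  by_cases e1 : x = c <;> by_cases e2 : x' = c
  · rw [e1, e2]
  · rw [if_pos e1, if_neg e2] at h
    by_cases e3 : x' = c + 1
    · rw [if_pos e3] at h; exact absurd h (by decide)
    · rw [if_neg e3] at h; exact absurd h (by decide)
  · rw [if_neg e1, if_pos e2] at h
    by_cases e3 : x = c + 1
    · rw [if_pos e3] at h; exact absurd h (by decide)
    · rw [if_neg e3] at h; exact absurd h (by decide)
  · rw [if_neg e1, if_neg e2] at h
    by_cases e3 : x = c + 1 <;> by_cases e4 : x' = c + 1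
    · rw [e3, e4]
    · rw [if_pos e3, if_neg e4] at h; exact absurd h (by decide)
    · rw [if_neg e3, if_pos e4] at h; exact absurd h (by decide)
    · have f1 : x = c - 1 := by
        rcases hx with e | e | e
        · exact absurd e e1
        · exact absurd e e3
        · exact e
      have f2 : x' = c - 1 := by
        rcases hx' with e | e | e
        · exact absurd e e2
        · exact absurd e e4
        · exact e
      rw [f1, f2]

lemma pos_of_ne_zero' {t : ℕ} [NeZero t] {j : Fin t} (hj : j ≠ 0) : (0 : Fin t) < j := by
  rw [Fin.lt_def, Fin.val_zero]
  rcases Nat.eq_zero_or_pos j.val with h0 | h0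
  · exact absurd (Fin.ext (by rw [h0, Fin.val_zero])) hj
  · exact h0

lemma upper (hn : 3 ≤ n) (hr : 1 ≤ r) {t : ℕ}
    (h : HasCliqueImmersion (LG n r) t) : t ≤ 3*r := by
  by_contra hlt
  push_neg at hlt
  obtain ⟨φ, hinj, P, hpath, hdisj⟩ := h
  haveI : NeZero t := ⟨by omega⟩
  have hne0 : ∀ m : Fin (3*r), (⟨m.val + 1, by omega⟩ : Fin t) ≠ 0 := by
    intro m hm
    have h2 := congrArg Fin.val hm
    simp [Fin.val_zero] at h2
  have hnonnil : ∀ j : Fin t, j ≠ 0 → ¬ (P 0 j).Nil := by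
    intro j hj
    exact Walk.not_nil_of_ne (fun he => hj (hinj he).symm)
  have hadj : ∀ j : Fin t, j ≠ 0 → (LG n r).Adj (φ 0) ((P 0 j).getVert 1) :=
    fun j hj => Walk.adj_snd (hnonnil j hj)
  have hmem : ∀ j : Fin t, j ≠ 0 → s(φ 0, (P 0 j).getVert 1) ∈ (P 0 j).edges := by
    intro j hj
    obtain ⟨u, ha, q, hq⟩ := Walk.not_nil_iff.mp (hnonnil j hj)
    rw [hq]
    simp
  have hwinj : ∀ j j' : Fin t, j ≠ 0 → j' ≠ 0 → j ≠ j' →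
      (P 0 j).getVert 1 ≠ (P 0 j').getVert 1 := by
    intro j j' hj hj' hjj heq
    have hd := hdisj 0 j 0 j' (pos_of_ne_zero' hj) (pos_of_ne_zero' hj')
      (by simp [hjj])
    exact hd (hmem j hj) (by rw [heq]; exact hmem j' hj')
  set c : Fin n := (φ 0).1 with hc
  let g : Fin (3*r) → Fin 3 × Fin r := fun m =>
    ((if ((P 0 (⟨m.val + 1, by omega⟩ : Fin t)).getVert 1).1 = c then 2
      else if ((P 0 (⟨m.val + 1, by omega⟩ : Fin t)).getVert 1).1 = c + 1 then 1
      else 0 : Fin 3), ((P 0 (⟨m.val + 1, by omega⟩ : Fin t)).getVert 1).2)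
  have hcol : ∀ j : Fin t, j ≠ 0 → ((P 0 j).getVert 1).1 = c ∨
      ((P 0 j).getVert 1).1 = c + 1 ∨ ((P 0 j).getVert 1).1 = c - 1 := by
    intro j hj
    have ha := hadj j hj
    rw [LG_adj] at ha
    rcases ha with hcy | ⟨h1, -⟩
    · exact Or.inr (cyc_adj_cases hn hcy)
    · exact Or.inl h1.symm
  have ginj : Function.Injective g := by
    intro m m' hg
    by_contra hmm
    have hjj : (⟨m.val + 1, by omega⟩ : Fin t) ≠ ⟨m'.val + 1, by omega⟩ := by
      intro hh
      rw [Fin.ext_iff] at hh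
      exact hmm (Fin.ext (by simpa using hh))
    apply hwinj _ _ (hne0 m) (hne0 m') hjj
    have hg1 := congrArg Prod.fst hg
    have hg2 := congrArg Prod.snd hg
    simp only [g] at hg1 hg2
    exact Prod.ext (tag_inj c _ _ (hcol _ (hne0 m)) (hcol _ (hne0 m')) hg1) hg2
  have hnotmem : ((2 : Fin 3), (φ 0).2) ∉ Set.range g := by
    rintro ⟨m, hm⟩
    have hg1 := congrArg Prod.fst hm
    have hg2 := congrArg Prod.snd hm
    simp only [g] at hg1 hg2
    have hx : ((P 0 (⟨m.val + 1, by omega⟩ : Fin t)).getVert 1).1 = c := by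
      by_contra hxc
      rw [if_neg hxc] at hg1
      by_cases hxc' : ((P 0 (⟨m.val + 1, by omega⟩ : Fin t)).getVert 1).1 = c + 1
      · rw [if_pos hxc'] at hg1; exact absurd hg1 (by decide)
      · rw [if_neg hxc'] at hg1; exact absurd hg1 (by decide)
    have ha := hadj _ (hne0 m)
    rw [LG_adj] at ha
    rcases ha with hcy | ⟨-, hne2⟩
    · rw [hx] at hcy
      exact (cycleGraph n).loopless.irrefl c hcy
    · exact hne2 hg2.symm
  have hcard := Fintype.card_lt_of_injective_of_notMem g ginj hnotmem
  rw [Fintype.card_fin, Fintype.card_prod, Fintype.card_fin, Fintype.card_fin] at hcard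
  omega

end Construction
end ImmAux


theorem immersion_lexProd_cycle_complete (n r : ℕ) (hn : 3 ≤ n) (hr : 1 ≤ r) :
    immersionNumber (lexProd (SimpleGraph.cycleGraph n) (⊤ : SimpleGraph (Fin r))) = 3 * r := by
  haveI : NeZero n := ⟨by omega⟩
  haveI : NeZero r := ⟨by omega⟩
  have hl := ImmAux.lower hn hr
  have hub : ∀ x ∈ {t | HasCliqueImmersion
      (lexProd (SimpleGraph.cycleGraph n) (⊤ : SimpleGraph (Fin r))) t}, x ≤ 3*r :=
    fun x hx => ImmAux.upper hn hr hx
  rw [immersionNumber]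
  exact le_antisymm (csSup_le ⟨3*r, hl⟩ hub) (le_csSup ⟨3*r, hub⟩ hl)
end

section
/- The immersion number of the lexicographic product K_3∘C_5 equals 13. -/
set_option linter.unusedVariables false

open SimpleGraph

section ImmersionAux

abbrev GG : SimpleGraph (Fin 3 × Fin 5) :=
  lexProd (⊤ : SimpleGraph (Fin 3)) (SimpleGraph.cycleGraph 5)
abbrev VV := Fin 3 × Fin 5

instance {α : Type*} [DecidableEq α] (l1 l2 : List α) : Decidable (List.Disjoint l1 l2) :=
  inferInstanceAs (Decidable (∀ a ∈ l1, a ∉ l2))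

def chainB {V : Type*} (G : SimpleGraph V) [DecidableRel G.Adj] : V → List V → Bool
  | _, [] => true
  | u, x :: l => decide (G.Adj u x) && chainB G x l

def chainWalk {V : Type*} {G : SimpleGraph V} [DecidableRel G.Adj] :
    ∀ (u : V) (l : List V) (v : V), chainB G u (l ++ [v]) = true → G.Walk u v
  | u, [], v, h => Walk.cons (by simp [chainB] at h; exact h) Walk.nil
  | u, x :: l, v, h =>
      Walk.cons (by simp [chainB] at h; exact h.1)
        (chainWalk x l v (by simp [chainB] at h; exact h.2))

def vr0 : VV := (0, 0)
def vr1 : VV := (1, 0)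

/-- Routing table for the 11 non-adjacent terminal pairs (both orientations). -/
def tbl : List (VV × VV × List VV) :=
  [ ((0,1), (0,4), [vr0]), ((0,4), (0,1), [vr0]),
    ((1,1), (1,3), [vr0]), ((1,3), (1,1), [vr0]),
    ((1,2), (1,4), [vr0]), ((1,4), (1,2), [vr0]),
    ((2,2), (2,4), [vr0]), ((2,4), (2,2), [vr0]),
    ((2,1), (2,3), [vr0]), ((2,3), (2,1), [vr0]),
    ((0,1), (0,3), [vr1]), ((0,3), (0,1), [vr1]),
    ((0,2), (0,4), [vr1]), ((0,4), (0,2), [vr1]),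
    ((1,1), (1,4), [vr1]), ((1,4), (1,1), [vr1]),
    ((2,1), (2,4), [vr1]), ((2,4), (2,1), [vr1]),
    ((2,0), (2,3), [vr1]), ((2,3), (2,0), [vr1]),
    ((2,0), (2,2), [vr0, vr1]), ((2,2), (2,0), [vr1, vr0]) ]

/-- Internal vertices of the designated walk from `u` to `v`. -/
def inn (u v : VV) : List VV :=
  if GG.Adj u v then []
  else match tbl.find? (fun e => e.1 == u && e.2.1 == v) with
    | some e => e.2.2
    | none => [(u.1 + 1, u.2)]

lemma chain_ok : ∀ u v : VV, u ≠ v → chainB GG u (inn u v ++ [v]) = true := by decide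

def route (u v : VV) : GG.Walk u v :=
  if h : u = v then h ▸ Walk.nil
  else chainWalk u (inn u v) v (chain_ok u v h)

def φ13 : Fin 13 → VV :=
  ![(0,1), (0,2), (0,3), (0,4), (1,1), (1,2), (1,3), (1,4),
    (2,0), (2,1), (2,2), (2,3), (2,4)]

lemma inj13 : Function.Injective φ13 := by decide

lemma paths13 : ∀ i j : Fin 13, i < j → (route (φ13 i) (φ13 j)).support.Nodup := by decide

set_option maxHeartbeats 4000000 in
lemma disj13 : ∀ i j k l : Fin 13, i < j → k < l → (i, j) ≠ (k, l) →
    List.Disjoint (route (φ13 i) (φ13 j)).edges (route (φ13 k) (φ13 l)).edges := by decide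

lemma has13 : HasCliqueImmersion GG 13 :=
  ⟨φ13, inj13, fun i j => route (φ13 i) (φ13 j),
    fun i j h => Walk.IsPath.mk' (paths13 i j h), disj13⟩

lemma deg12 : ∀ v : VV, GG.degree v = 12 := by decide

lemma firstEdge_spec {V : Type*} {G : SimpleGraph V} {u v : V} (w : G.Walk u v)
    (h : u ≠ v) (e : Sym2 V) :
    (w.edges.head?.getD e) ∈ w.edges ∧ (w.edges.head?.getD e) ∈ G.incidenceSet u := by
  cases w with
  | nil => exact absurd rfl h
  | cons hadj q =>
      simp only [Walk.edges_cons, List.head?_cons, Option.getD_some]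
      exact ⟨List.mem_cons_self, (G.mem_incidenceSet _ _).mpr hadj⟩

lemma upper13 : ∀ t ∈ {t | HasCliqueImmersion GG t}, t ≤ 13 := by
  rintro t ⟨φ, hinj, P, hpath, hdisj⟩
  by_contra hlt
  push_neg at hlt
  have ht : 14 ≤ t := hlt
  set v0 : Fin t := ⟨0, by omega⟩ with hv0
  set F : Fin t → Sym2 VV :=
    fun j => (P v0 j).edges.head?.getD (s(φ v0, φ v0)) with hF
  have hne : ∀ j : Fin t, v0 ≠ j → φ v0 ≠ φ j := fun j hj he => hj (hinj he)
  have hmem : ∀ j ∈ Finset.Ioi v0, F j ∈ GG.incidenceFinset (φ v0) := by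
    intro j hj
    have hj' : v0 < j := Finset.mem_Ioi.mp hj
    rw [SimpleGraph.mem_incidenceFinset]
    exact (firstEdge_spec (P v0 j) (hne j hj'.ne) _).2
  have hinjOn : Set.InjOn F (Finset.Ioi v0) := by
    intro j hj k hk hFe
    by_contra hjk
    have hj' : v0 < j := Finset.mem_Ioi.mp hj
    have hk' : v0 < k := Finset.mem_Ioi.mp hk
    have hFj : F j ∈ (P v0 j).edges := (firstEdge_spec (P v0 j) (hne j hj'.ne) _).1
    have hFk : F k ∈ (P v0 k).edges := (firstEdge_spec (P v0 k) (hne k hk'.ne) _).1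
    have hpairs : ((v0, j) : Fin t × Fin t) ≠ (v0, k) :=
      fun he => hjk (congrArg Prod.snd he)
    exact (hdisj v0 j v0 k hj' hk' hpairs) hFj (hFe ▸ hFk)
  have hcard := Finset.card_le_card_of_injOn F hmem hinjOn
  rw [Fin.card_Ioi, SimpleGraph.card_incidenceFinset_eq_degree, deg12] at hcard
  have hv0val : (v0 : ℕ) = 0 := rfl
  omega

end ImmersionAux

theorem immersion_lexProd_K3_C5 :
    immersionNumber (lexProd (⊤ : SimpleGraph (Fin 3)) (SimpleGraph.cycleGraph 5)) = 13 := by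
  have hbdd : BddAbove {t | HasCliqueImmersion GG t} := ⟨13, fun t ht => upper13 t ht⟩
  exact le_antisymm (csSup_le ⟨13, has13⟩ upper13) (le_csSup hbdd has13)
end

section
/- For all integers n ≥ 6 and d ≥ 2, the immersion number of P_n^d (the Cartesian product of d copies of the path P_n) equals 2d + 1. -/
set_option linter.unusedVariables false

open SimpleGraph

namespace Imm

open Function Walk

/-- totalization: partial system of walks gives an immersion -/
lemma hasCliqueImmersion_of_partial {V : Type*} {G : SimpleGraph V} {t : ℕ}
    (φ : Fin t → V) (hφ : Function.Injective φ)
    (W : ∀ i j : Fin t, i < j → G.Walk (φ i) (φ j))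
    (hp : ∀ i j (h : i < j), (W i j h).IsPath)
    (hd : ∀ i j k l (hij : i < j) (hkl : k < l), (i, j) ≠ (k, l) →
      List.Disjoint (W i j hij).edges (W k l hkl).edges) :
    HasCliqueImmersion G t := by
  refine ⟨φ, hφ, fun i j => ?_, ?_, ?_⟩
  · exact if h : i < j then W i j h else
      if h' : j < i then (W j i h').reverse else
      Walk.nil.copy rfl (congrArg φ (le_antisymm (not_lt.1 h') (not_lt.1 h)))
  · intro i j h; simp only [dif_pos h]; exact hp i j h
  · intro i j k l hij hkl hne; simp only [dif_pos hij, dif_pos hkl]; exact hd i j k l hij hkl hne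

/-- transfer along an injective homomorphism -/
lemma hasCliqueImmersion_map {V W : Type*} {G : SimpleGraph V} {G' : SimpleGraph W}
    (f : G →g G') (hf : Function.Injective f) {t : ℕ}
    (h : HasCliqueImmersion G t) : HasCliqueImmersion G' t := by
  obtain ⟨φ, hφ, P, hp, hd⟩ := h
  refine ⟨fun i => f (φ i), hf.comp hφ, fun i j => (P i j).map f, ?_, ?_⟩
  · intro i j hij; exact Walk.map_isPath_of_injective hf (hp i j hij)
  · intro i j k l hij hkl hne e he1 he2
    rw [Walk.edges_map, List.mem_map] at he1 he2
    obtain ⟨e1, he1, rfl⟩ := he1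
    obtain ⟨e2, he2, heq⟩ := he2
    exact hd i j k l hij hkl hne he1 (Sym2.map.injective hf heq ▸ he2)

lemma hasCliqueImmersion_zero {V : Type*} (G : SimpleGraph V) : HasCliqueImmersion G 0 :=
  ⟨Fin.elim0, fun i => i.elim0, fun i => i.elim0, fun i => i.elim0, fun i => i.elim0⟩

lemma mem_edges_getVert_one {V : Type*} {G : SimpleGraph V} {u v : V} {p : G.Walk u v}
    (h : ¬ p.Nil) : s(u, p.getVert 1) ∈ p.edges := by
  cases p with
  | nil => simp at h
  | cons h q => simp [Walk.edges_cons]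

/-- upper bound: any immersion size is at most 2d+1 in boxPow (pathGraph n) d -/
lemma upper {n d t : ℕ} (h : HasCliqueImmersion (boxPow (SimpleGraph.pathGraph n) d) t) :
    t ≤ 2 * d + 1 := by
  rcases Nat.lt_or_ge t 2 with ht | ht
  · omega
  obtain ⟨t', rfl⟩ : ∃ t', t = t' + 2 := ⟨t - 2, by omega⟩
  obtain ⟨φ, hφ, P, hp, hd⟩ := h
  have hnn : ∀ j : Fin (t' + 2), j ≠ 0 → ¬ (P 0 j).Nil := fun j hj =>
    Walk.not_nil_of_ne (fun hc => hj (hφ hc).symm)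
  let y : ∀ j : Fin (t' + 2), j ≠ 0 → (Fin d → Fin n) := fun j hj => (P 0 j).getVert 1
  have hadj : ∀ j (hj : j ≠ 0), (boxPow (SimpleGraph.pathGraph n) d).Adj (φ 0) (y j hj) := fun j hj =>
    Walk.adj_snd (hnn j hj)
  have he : ∀ j (hj : j ≠ 0), s(φ 0, y j hj) ∈ (P 0 j).edges := fun j hj =>
    mem_edges_getVert_one (hnn j hj)
  have hyinj : ∀ j k (hj : j ≠ 0) (hk : k ≠ 0), y j hj = y k hk → j = k := by
    intro j k hj hk hyjk
    by_contra hne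
    have h2 := he k hk
    rw [← hyjk] at h2
    have hdd := hd 0 j 0 k (Fin.pos_of_ne_zero hj) (Fin.pos_of_ne_zero hk) (by simp [hne])
    exact hdd (he j hj) h2
  have key2 : ∀ j (hj : j ≠ 0), ∃ i : Fin d,
      (SimpleGraph.pathGraph n).Adj (φ 0 i) (y j hj i) ∧ ∀ m, m ≠ i → φ 0 m = y j hj m :=
    fun j hj => hadj j hj
  choose c hc1 hc2 using key2
  have hinj : Function.Injective
      (fun j : {j : Fin (t' + 2) // j ≠ 0} =>
        (c j.1 j.2, decide ((φ 0 (c j.1 j.2)).val < (y j.1 j.2 (c j.1 j.2)).val))) := by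
    rintro ⟨j, hj⟩ ⟨k, hk⟩ hjk
    simp only [Prod.mk.injEq, decide_eq_decide] at hjk
    obtain ⟨hcc, hbb⟩ := hjk
    have hyy : y j hj = y k hk := by
      funext m
      by_cases hm : m = c j hj
      · have h1 := SimpleGraph.pathGraph_adj.1 (hc1 j hj)
        have h2 := SimpleGraph.pathGraph_adj.1 (hc1 k hk)
        rw [← hcc] at h2 hbb
        subst hm
        apply Fin.ext
        omega
      · rw [← hc2 j hj m hm, ← hc2 k hk m (fun hc => hm (hc.trans hcc.symm))]
    exact Subtype.ext (hyinj j k hj hk hyy)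
  have hcard := Fintype.card_le_of_injective _ hinj
  simp only [Fintype.card_prod, Fintype.card_fin, Fintype.card_bool] at hcard
  rw [Fintype.card_subtype_compl] at hcard
  simp only [Fintype.card_fin, Fintype.card_subtype_eq] at hcard
  omega


open Function Walk Fin

abbrev P6 := SimpleGraph.pathGraph 6
abbrev Gd (d : ℕ) : SimpleGraph (Fin d → Fin 6) := boxPow P6 d

lemma snoc_eq_snoc_iff {d : ℕ} {x y : Fin d → Fin 6} {c c' : Fin 6} :
    (Fin.snoc x c : Fin (d+1) → Fin 6) = Fin.snoc y c' ↔ x = y ∧ c = c' := by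
  constructor
  · intro h
    refine ⟨?_, ?_⟩
    · have := congrArg Fin.init h
      rwa [Fin.init_snoc, Fin.init_snoc] at this
    · have := congrFun h (Fin.last d)
      rwa [Fin.snoc_last, Fin.snoc_last] at this
  · rintro ⟨rfl, rfl⟩; rfl

/-- horizontal embedding at level c -/
abbrev lift {d : ℕ} (c : Fin 6) : Gd d →g Gd (d + 1) where
  toFun x := Fin.snoc x c
  map_rel' := by
    rintro x y ⟨i, hadj, hoth⟩
    refine ⟨i.castSucc, ?_, ?_⟩
    · simpa only [Fin.snoc_castSucc] using hadj
    · intro j hj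
      induction j using Fin.lastCases with
      | last => simp only [Fin.snoc_last]
      | cast j' =>
        simp only [Fin.snoc_castSucc]
        exact hoth j' (fun hc => hj (by rw [hc]))

lemma lift_injective {d : ℕ} (c : Fin 6) : Function.Injective (lift (d := d) c) :=
  fun x y h => (snoc_eq_snoc_iff.1 h).1

lemma adj_vert {d : ℕ} (x : Fin d → Fin 6) {c c' : Fin 6} (h : P6.Adj c c') :
    (Gd (d+1)).Adj (Fin.snoc x c) (Fin.snoc x c') := by
  refine ⟨Fin.last d, ?_, ?_⟩
  · rwa [Fin.snoc_last, Fin.snoc_last]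
  · intro j hj
    obtain ⟨j', rfl⟩ := Fin.exists_castSucc_eq.2 hj
    rw [Fin.snoc_castSucc, Fin.snoc_castSucc]

lemma p6adj {a b : Fin 6} (h : a.val + 1 = b.val) : P6.Adj a b :=
  SimpleGraph.pathGraph_adj.2 (Or.inl h)

/-- last coordinate -/
def L {d : ℕ} (v : Fin (d+1) → Fin 6) : Fin 6 := v (Fin.last d)

lemma L_snoc {d : ℕ} (x : Fin d → Fin 6) (c : Fin 6) : L (Fin.snoc x c) = c := by simp [L]

lemma mem_lift_edges {d : ℕ} {c : Fin 6} {u v : Fin d → Fin 6} {w : (Gd d).Walk u v}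
    {e : Sym2 (Fin (d+1) → Fin 6)} (he : e ∈ (w.map (lift c)).edges) :
    ∃ e₀ ∈ w.edges, e = Sym2.map (fun x => Fin.snoc x c) e₀ := by
  rw [Walk.edges_map, List.mem_map] at he
  obtain ⟨e₀, h1, h2⟩ := he
  exact ⟨e₀, h1, h2.symm⟩

lemma lift_edges_level {d : ℕ} {c : Fin 6} {u v : Fin d → Fin 6} {w : (Gd d).Walk u v}
    {e : Sym2 (Fin (d+1) → Fin 6)} (he : e ∈ (w.map (lift c)).edges) :
    ∀ z ∈ e, L z = c := by
  obtain ⟨e₀, -, rfl⟩ := mem_lift_edges he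
  intro z hz
  rw [Sym2.mem_map] at hz
  obtain ⟨z₀, -, rfl⟩ := hz
  exact L_snoc _ _

/-- a vertical edge is never an all-level-c edge -/
lemma vert_ne_level {d : ℕ} {c γ γ' : Fin 6} (hγ : γ ≠ γ') {x : Fin d → Fin 6}
    {e : Sym2 (Fin (d+1) → Fin 6)} (hl : ∀ z ∈ e, L z = c) :
    e ≠ s(Fin.snoc x γ, Fin.snoc x γ') := by
  rintro rfl
  have h1 := hl _ (Sym2.mem_mk_left _ _)
  have h2 := hl _ (Sym2.mem_mk_right _ _)
  rw [L_snoc] at h1 h2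
  exact hγ (h1.trans h2.symm)

lemma level_ne_level {d : ℕ} {c c' : Fin 6} (hcc : c ≠ c') {e : Sym2 (Fin (d+1) → Fin 6)}
    (h1 : ∀ z ∈ e, L z = c) (h2 : ∀ z ∈ e, L z = c') : False := by
  induction e with
  | _ a b => exact hcc ((h1 a (Sym2.mem_mk_left _ _)).symm.trans (h2 a (Sym2.mem_mk_left _ _)))

/-- same-level lifted edges come from old edges injectively -/
lemma lift_lift_disjoint {d : ℕ} {c : Fin 6} {u v u' v' : Fin d → Fin 6}
    {w1 : (Gd d).Walk u v} {w2 : (Gd d).Walk u' v'}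
    (hdisj : List.Disjoint w1.edges w2.edges)
    {e : Sym2 (Fin (d+1) → Fin 6)} (h1 : e ∈ (w1.map (lift c)).edges)
    (h2 : e ∈ (w2.map (lift c)).edges) : False := by
  obtain ⟨e1, he1, rfl⟩ := mem_lift_edges h1
  obtain ⟨e2, he2, heq⟩ := mem_lift_edges h2
  have : e1 = e2 := Sym2.map.injective (fun x y h => (snoc_eq_snoc_iff.1 h).1) heq
  exact hdisj he1 (this ▸ he2)

lemma vert_eq_vert {d : ℕ} {x y : Fin d → Fin 6} {γ1 γ2 δ1 δ2 : Fin 6}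
    (h : s(Fin.snoc x γ1, Fin.snoc x γ2) = s(Fin.snoc y δ1, (Fin.snoc y δ2 : Fin (d+1) → Fin 6))) :
    x = y ∧ s(γ1, γ2) = s(δ1, δ2) := by
  rw [Sym2.eq_iff] at h ⊢
  rcases h with ⟨h1, h2⟩ | ⟨h1, h2⟩
  · obtain ⟨hx, hc⟩ := snoc_eq_snoc_iff.1 h1
    obtain ⟨-, hc'⟩ := snoc_eq_snoc_iff.1 h2
    exact ⟨hx, Or.inl ⟨hc, hc'⟩⟩
  · obtain ⟨hx, hc⟩ := snoc_eq_snoc_iff.1 h1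
    obtain ⟨-, hc'⟩ := snoc_eq_snoc_iff.1 h2
    exact ⟨hx, Or.inr ⟨hc, hc'⟩⟩



lemma padj (a b : Fin 6) (h : a.val + 1 = b.val ∨ b.val + 1 = a.val) : P6.Adj a b :=
  SimpleGraph.pathGraph_adj.2 h

lemma adj_horiz {d : ℕ} (c : Fin 6) {x y : Fin d → Fin 6} (h : (Gd d).Adj x y) :
    (Gd (d+1)).Adj (Fin.snoc x c) (Fin.snoc y c) := (lift c).map_adj h

lemma level_of_map {d : ℕ} {c : Fin 6} (e₀ : Sym2 (Fin d → Fin 6)) :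
    ∀ z ∈ Sym2.map (fun x => (Fin.snoc x c : Fin (d+1) → Fin 6)) e₀, L z = c := by
  induction e₀ with
  | _ a b =>
    intro z hz
    simp only [Sym2.map_pair_eq, Sym2.mem_iff] at hz
    rcases hz with rfl | rfl <;> exact L_snoc _ _

lemma map_snoc_inj {d : ℕ} {c : Fin 6} {e1 e2 : Sym2 (Fin d → Fin 6)}
    (h : Sym2.map (fun x => (Fin.snoc x c : Fin (d+1) → Fin 6)) e1 =
      Sym2.map (fun x => (Fin.snoc x c : Fin (d+1) → Fin 6)) e2) : e1 = e2 :=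
  Sym2.map.injective (fun x y hxy => (snoc_eq_snoc_iff.1 hxy).1) h

section Step
variable {d : ℕ} (φ : Fin (2*d+1) → (Fin d → Fin 6))
  (W : ∀ i j : Fin (2*d+1), i < j → (Gd d).Walk (φ i) (φ j))
  (v' : Fin d → Fin 6) (hv : (Gd d).Adj (φ 0) v')

abbrev A : Fin (d+1) → Fin 6 := Fin.snoc (φ 0) 1
abbrev B : Fin (d+1) → Fin 6 := Fin.snoc (φ 0) 3
abbrev U (k : Fin (2*d+1)) : Fin (d+1) → Fin 6 := Fin.snoc (φ k) 2

def wAU (k : Fin (2*d+1)) : (Gd (d+1)).Walk (A φ) (U φ k) :=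
  if h : 0 < k then
    (Walk.cons (adj_vert (φ k) (padj 2 1 (by decide))) (((W 0 k h).reverse).map (lift 1))).reverse
  else
    (Walk.cons (adj_vert (φ 0) (padj 1 2 (by decide))) Walk.nil).copy rfl
      (congrArg (U φ) (le_antisymm (Fin.zero_le _) (not_lt.1 h)))

def wUB (k : Fin (2*d+1)) : (Gd (d+1)).Walk (U φ k) (B φ) :=
  if h : 0 < k then
    Walk.cons (adj_vert (φ k) (padj 2 3 (by decide))) (((W 0 k h).reverse).map (lift 3))
  else
    (Walk.cons (adj_vert (φ 0) (padj 2 3 (by decide))) Walk.nil).copy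
      (congrArg (U φ) (le_antisymm (Fin.zero_le _) (not_lt.1 h))) rfl

def wUU (i j : Fin (2*d+1)) (h : i < j) : (Gd (d+1)).Walk (U φ i) (U φ j) :=
  (W i j h).map (lift 2)

def wAB : (Gd (d+1)).Walk (A φ) (B φ) :=
  .cons (adj_vert (φ 0) (padj 1 0 (by decide))) <|
  .cons (adj_horiz 0 hv) <|
  .cons (adj_vert v' (padj 0 1 (by decide))) <|
  .cons (adj_vert v' (padj 1 2 (by decide))) <|
  .cons (adj_vert v' (padj 2 3 (by decide))) <|
  .cons (adj_vert v' (padj 3 4 (by decide))) <|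
  .cons (adj_horiz 4 hv.symm) <|
  .cons (adj_vert (φ 0) (padj 4 3 (by decide))) Walk.nil

lemma mem_wAU {k : Fin (2*d+1)} {e : Sym2 (Fin (d+1) → Fin 6)}
    (he : e ∈ (wAU φ W k).edges) :
    e = s(Fin.snoc (φ k) 2, Fin.snoc (φ k) 1) ∨
      ∃ (h : 0 < k), ∃ e₀ ∈ (W 0 k h).edges,
        e = Sym2.map (fun x => (Fin.snoc x 1 : Fin (d+1) → Fin 6)) e₀ := by
  unfold wAU at he
  split at he
  case isTrue h =>
    rw [Walk.edges_reverse, List.mem_reverse, Walk.edges_cons, List.mem_cons] at he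
    rcases he with rfl | he
    · exact Or.inl rfl
    · obtain ⟨e₀, he₀, rfl⟩ := mem_lift_edges he
      rw [Walk.edges_reverse, List.mem_reverse] at he₀
      exact Or.inr ⟨h, e₀, he₀, rfl⟩
  case isFalse h =>
    rw [Walk.edges_copy, Walk.edges_cons, Walk.edges_nil, List.mem_singleton] at he
    subst he
    have hk : (0 : Fin (2*d+1)) = k := le_antisymm (Fin.zero_le _) (not_lt.1 h)
    subst hk
    exact Or.inl (Sym2.eq_swap)

lemma mem_wUB {k : Fin (2*d+1)} {e : Sym2 (Fin (d+1) → Fin 6)}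
    (he : e ∈ (wUB φ W k).edges) :
    e = s(Fin.snoc (φ k) 2, Fin.snoc (φ k) 3) ∨
      ∃ (h : 0 < k), ∃ e₀ ∈ (W 0 k h).edges,
        e = Sym2.map (fun x => (Fin.snoc x 3 : Fin (d+1) → Fin 6)) e₀ := by
  unfold wUB at he
  split at he
  case isTrue h =>
    rw [Walk.edges_cons, List.mem_cons] at he
    rcases he with rfl | he
    · exact Or.inl rfl
    · obtain ⟨e₀, he₀, rfl⟩ := mem_lift_edges he
      rw [Walk.edges_reverse, List.mem_reverse] at he₀
      exact Or.inr ⟨h, e₀, he₀, rfl⟩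
  case isFalse h =>
    rw [Walk.edges_copy, Walk.edges_cons, Walk.edges_nil, List.mem_singleton] at he
    subst he
    have hk : (0 : Fin (2*d+1)) = k := le_antisymm (Fin.zero_le _) (not_lt.1 h)
    subst hk
    exact Or.inl rfl

lemma mem_wUU {i j : Fin (2*d+1)} {h : i < j} {e : Sym2 (Fin (d+1) → Fin 6)}
    (he : e ∈ (wUU φ W i j h).edges) :
    ∃ e₀ ∈ (W i j h).edges,
      e = Sym2.map (fun x => (Fin.snoc x 2 : Fin (d+1) → Fin 6)) e₀ :=
  mem_lift_edges he

lemma mem_wAB {e : Sym2 (Fin (d+1) → Fin 6)} (he : e ∈ (wAB φ v' hv).edges) :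
    e = s(Fin.snoc (φ 0) 1, Fin.snoc (φ 0) 0) ∨
    e = s(Fin.snoc (φ 0) 0, Fin.snoc v' 0) ∨
    e = s(Fin.snoc v' 0, Fin.snoc v' 1) ∨
    e = s(Fin.snoc v' 1, Fin.snoc v' 2) ∨
    e = s(Fin.snoc v' 2, Fin.snoc v' 3) ∨
    e = s(Fin.snoc v' 3, Fin.snoc v' 4) ∨
    e = s(Fin.snoc v' 4, Fin.snoc (φ 0) 4) ∨
    e = s(Fin.snoc (φ 0) 4, Fin.snoc (φ 0) 3) := by
  unfold wAB at he
  simp only [Walk.edges_cons, Walk.edges_nil, List.mem_cons, List.not_mem_nil, or_false] at he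
  exact he



lemma path_wAU (hp : ∀ i j (h : i < j), (W i j h).IsPath) (k : Fin (2*d+1)) :
    (wAU φ W k).IsPath := by
  unfold wAU
  split
  case isTrue h =>
    rw [Walk.isPath_reverse_iff, Walk.cons_isPath_iff]
    refine ⟨Walk.map_isPath_of_injective (lift_injective 1) ((hp 0 k h).reverse), ?_⟩
    intro hc
    rw [Walk.support_map, List.mem_map] at hc
    obtain ⟨z, -, hz⟩ := hc
    exact absurd (snoc_eq_snoc_iff.1 hz).2 (by decide)
  case isFalse h =>
    rw [Walk.isPath_copy, Walk.cons_isPath_iff]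
    refine ⟨Walk.IsPath.nil, ?_⟩
    simp only [Walk.support_nil, List.mem_singleton]
    intro hc
    exact absurd (snoc_eq_snoc_iff.1 hc).2 (by decide)

lemma path_wUB (hp : ∀ i j (h : i < j), (W i j h).IsPath) (k : Fin (2*d+1)) :
    (wUB φ W k).IsPath := by
  unfold wUB
  split
  case isTrue h =>
    rw [Walk.cons_isPath_iff]
    refine ⟨Walk.map_isPath_of_injective (lift_injective 3) ((hp 0 k h).reverse), ?_⟩
    intro hc
    rw [Walk.support_map, List.mem_map] at hc
    obtain ⟨z, -, hz⟩ := hc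
    exact absurd (snoc_eq_snoc_iff.1 hz).2 (by decide)
  case isFalse h =>
    rw [Walk.isPath_copy, Walk.cons_isPath_iff]
    refine ⟨Walk.IsPath.nil, ?_⟩
    simp only [Walk.support_nil, List.mem_singleton]
    intro hc
    exact absurd (snoc_eq_snoc_iff.1 hc).2 (by decide)

lemma path_wUU (hp : ∀ i j (h : i < j), (W i j h).IsPath) (i j : Fin (2*d+1)) (h : i < j) :
    (wUU φ W i j h).IsPath :=
  Walk.map_isPath_of_injective (lift_injective 2) (hp i j h)

lemma path_wAB (hv0 : φ 0 ≠ v') : (wAB φ v' hv).IsPath := by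
  unfold wAB
  rw [Walk.isPath_def]
  simp (config := { decide := true }) [A, B, Walk.support_cons, Walk.support_nil,
    List.nodup_cons, snoc_eq_snoc_iff, hv0, (Ne.symm hv0 : v' ≠ φ 0)]

end Step

lemma horiz_level {d : ℕ} (x y : Fin d → Fin 6) (c : Fin 6) :
    ∀ z ∈ s(Fin.snoc x c, (Fin.snoc y c : Fin (d+1) → Fin 6)), L z = c := by
  intro z hz
  rcases Sym2.mem_iff.1 hz with rfl | rfl <;> exact L_snoc _ _

lemma vert_ne_horiz {d : ℕ} {γ γ' c : Fin 6} (hγ : γ ≠ γ') (z x y : Fin d → Fin 6) :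
    s(Fin.snoc z γ, Fin.snoc z γ') ≠ s(Fin.snoc x c, (Fin.snoc y c : Fin (d+1) → Fin 6)) :=
  fun h => vert_ne_level hγ (horiz_level x y c) h.symm

lemma map_ne_vert {d : ℕ} {c γ γ' : Fin 6} (hγ : γ ≠ γ') (e₀ : Sym2 (Fin d → Fin 6))
    (z : Fin d → Fin 6) :
    Sym2.map (fun x => (Fin.snoc x c : Fin (d+1) → Fin 6)) e₀ ≠ s(Fin.snoc z γ, Fin.snoc z γ') :=
  vert_ne_level hγ (level_of_map e₀)

lemma horiz_ne_map {d : ℕ} {c c' : Fin 6} (hcc : c ≠ c') (x y : Fin d → Fin 6)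
    (e₀ : Sym2 (Fin d → Fin 6)) :
    s(Fin.snoc x c, (Fin.snoc y c : Fin (d+1) → Fin 6)) ≠
      Sym2.map (fun x => (Fin.snoc x c' : Fin (d+1) → Fin 6)) e₀ :=
  fun h => level_ne_level hcc (horiz_level x y c) (fun z hz => level_of_map e₀ z (h ▸ hz))

lemma map_ne_map {d : ℕ} {c c' : Fin 6} (hcc : c ≠ c') (e₀ e₁ : Sym2 (Fin d → Fin 6)) :
    Sym2.map (fun x => (Fin.snoc x c : Fin (d+1) → Fin 6)) e₀ ≠
      Sym2.map (fun x => (Fin.snoc x c' : Fin (d+1) → Fin 6)) e₁ :=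
  fun h => level_ne_level hcc (level_of_map e₀) (fun z hz => level_of_map e₁ z (h ▸ hz))

section Disj
variable {d : ℕ} {φ : Fin (2*d+1) → (Fin d → Fin 6)}
  {W : ∀ i j : Fin (2*d+1), i < j → (Gd d).Walk (φ i) (φ j)}
  {v' : Fin d → Fin 6} {hv : (Gd d).Adj (φ 0) v'}

lemma disj_AB_AU (hvr : v' ∉ Set.range φ) (k : Fin (2*d+1)) :
    ∀ e, e ∈ (wAB φ v' hv).edges → e ∈ (wAU φ W k).edges → False := by
  intro e h1 h2
  rcases mem_wAU φ W h2 with rfl | ⟨hk, e₀, he₀, rfl⟩ <;>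
    rcases mem_wAB φ v' hv h1 with h|h|h|h|h|h|h|h <;>
    first
      | exact absurd (vert_eq_vert h).2 (by decide)
      | exact hvr (Set.mem_range.2 ⟨k, (vert_eq_vert h).1⟩)
      | exact absurd h (vert_ne_horiz (by decide) _ _ _)
      | exact absurd h (map_ne_vert (by decide) _ _)
      | exact absurd h.symm (horiz_ne_map (by decide) _ _ _)

lemma disj_AB_UB (hvr : v' ∉ Set.range φ) (k : Fin (2*d+1)) :
    ∀ e, e ∈ (wAB φ v' hv).edges → e ∈ (wUB φ W k).edges → False := by
  intro e h1 h2
  rcases mem_wUB φ W h2 with rfl | ⟨hk, e₀, he₀, rfl⟩ <;>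
    rcases mem_wAB φ v' hv h1 with h|h|h|h|h|h|h|h <;>
    first
      | exact absurd (vert_eq_vert h).2 (by decide)
      | exact hvr (Set.mem_range.2 ⟨k, (vert_eq_vert h).1⟩)
      | exact absurd h (vert_ne_horiz (by decide) _ _ _)
      | exact absurd h (map_ne_vert (by decide) _ _)
      | exact absurd h.symm (horiz_ne_map (by decide) _ _ _)

lemma disj_AB_UU (i j : Fin (2*d+1)) (h : i < j) :
    ∀ e, e ∈ (wAB φ v' hv).edges → e ∈ (wUU φ W i j h).edges → False := by
  intro e h1 h2
  obtain ⟨e₀, he₀, rfl⟩ := mem_wUU φ W h2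
  rcases mem_wAB φ v' hv h1 with h|h|h|h|h|h|h|h <;>
    first
      | exact absurd h (map_ne_vert (by decide) _ _)
      | exact absurd h.symm (horiz_ne_map (by decide) _ _ _)

lemma disj_AU_AU (hinj : Function.Injective φ)
    (hdisj : ∀ i j k l (hij : i < j) (hkl : k < l), (i,j) ≠ (k,l) →
      List.Disjoint (W i j hij).edges (W k l hkl).edges)
    {k k' : Fin (2*d+1)} (hkk : k ≠ k') :
    ∀ e, e ∈ (wAU φ W k).edges → e ∈ (wAU φ W k').edges → False := by
  intro e h1 h2
  rcases mem_wAU φ W h1 with rfl | ⟨hk, e₀, he₀, rfl⟩ <;>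
    rcases mem_wAU φ W h2 with h | ⟨hk', e₁, he₁, h⟩
  · exact hkk (hinj (vert_eq_vert h.symm).1.symm)
  · exact absurd h.symm (map_ne_vert (by decide) _ _)
  · exact absurd h (map_ne_vert (by decide) _ _)
  · have := map_snoc_inj h
    subst this
    exact hdisj 0 k 0 k' hk hk' (by simp [hkk]) he₀ he₁

lemma disj_UB_UB (hinj : Function.Injective φ)
    (hdisj : ∀ i j k l (hij : i < j) (hkl : k < l), (i,j) ≠ (k,l) →
      List.Disjoint (W i j hij).edges (W k l hkl).edges)
    {k k' : Fin (2*d+1)} (hkk : k ≠ k') :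
    ∀ e, e ∈ (wUB φ W k).edges → e ∈ (wUB φ W k').edges → False := by
  intro e h1 h2
  rcases mem_wUB φ W h1 with rfl | ⟨hk, e₀, he₀, rfl⟩ <;>
    rcases mem_wUB φ W h2 with h | ⟨hk', e₁, he₁, h⟩
  · exact hkk (hinj (vert_eq_vert h.symm).1.symm)
  · exact absurd h.symm (map_ne_vert (by decide) _ _)
  · exact absurd h (map_ne_vert (by decide) _ _)
  · have := map_snoc_inj h
    subst this
    exact hdisj 0 k 0 k' hk hk' (by simp [hkk]) he₀ he₁

lemma disj_AU_UB (k k' : Fin (2*d+1)) :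
    ∀ e, e ∈ (wAU φ W k).edges → e ∈ (wUB φ W k').edges → False := by
  intro e h1 h2
  rcases mem_wAU φ W h1 with rfl | ⟨hk, e₀, he₀, rfl⟩ <;>
    rcases mem_wUB φ W h2 with h | ⟨hk', e₁, he₁, h⟩
  · exact absurd (vert_eq_vert h.symm).2 (by decide)
  · exact absurd h.symm (map_ne_vert (by decide) _ _)
  · exact absurd h (map_ne_vert (by decide) _ _)
  · exact absurd h (map_ne_map (by decide) _ _)

lemma disj_AU_UU (k i j : Fin (2*d+1)) (h : i < j) :
    ∀ e, e ∈ (wAU φ W k).edges → e ∈ (wUU φ W i j h).edges → False := by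
  intro e h1 h2
  obtain ⟨e₁, he₁, h2'⟩ := mem_wUU φ W h2
  rcases mem_wAU φ W h1 with rfl | ⟨hk, e₀, he₀, rfl⟩
  · exact absurd h2'.symm (map_ne_vert (by decide) _ _)
  · exact absurd h2' (map_ne_map (by decide) _ _)

lemma disj_UB_UU (k i j : Fin (2*d+1)) (h : i < j) :
    ∀ e, e ∈ (wUB φ W k).edges → e ∈ (wUU φ W i j h).edges → False := by
  intro e h1 h2
  obtain ⟨e₁, he₁, h2'⟩ := mem_wUU φ W h2
  rcases mem_wUB φ W h1 with rfl | ⟨hk, e₀, he₀, rfl⟩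
  · exact absurd h2'.symm (map_ne_vert (by decide) _ _)
  · exact absurd h2' (map_ne_map (by decide) _ _)

lemma disj_UU_UU
    (hdisj : ∀ i j k l (hij : i < j) (hkl : k < l), (i,j) ≠ (k,l) →
      List.Disjoint (W i j hij).edges (W k l hkl).edges)
    {i j k l : Fin (2*d+1)} (hij : i < j) (hkl : k < l)
    (hne : (i, j) ≠ (k, l)) :
    ∀ e, e ∈ (wUU φ W i j hij).edges → e ∈ (wUU φ W k l hkl).edges → False := by
  intro e h1 h2
  obtain ⟨e₀, he₀, rfl⟩ := mem_wUU φ W h1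
  obtain ⟨e₁, he₁, h⟩ := mem_wUU φ W h2
  have := map_snoc_inj h
  subst this
  exact hdisj i j k l hij hkl hne he₀ he₁

end Disj


def Good (d : ℕ) : Prop :=
  ∃ (φ : Fin (2*d+1) → (Fin d → Fin 6))
    (W : ∀ i j : Fin (2*d+1), i < j → (Gd d).Walk (φ i) (φ j)),
    Function.Injective φ ∧
    (∀ i j (h : i < j), (W i j h).IsPath) ∧
    (∀ i j k l (hij : i < j) (hkl : k < l), (i,j) ≠ (k,l) →
        List.Disjoint (W i j hij).edges (W k l hkl).edges) ∧
    ∃ v', (Gd d).Adj (φ 0) v' ∧ v' ∉ Set.range φ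

def mid {d : ℕ} (i : Fin (2*(d+1)+1)) : Fin (2*d+1) := ⟨min (i.val - 1) (2*d), by omega⟩

def phi' {d : ℕ} (φ : Fin (2*d+1) → (Fin d → Fin 6)) :
    Fin (2*(d+1)+1) → (Fin (d+1) → Fin 6) :=
  fun i => if i.val = 0 then A φ else if i.val = 2*d+2 then B φ else U φ (mid i)

lemma phi'_0 {d : ℕ} (φ : Fin (2*d+1) → (Fin d → Fin 6)) (i : Fin (2*(d+1)+1))
    (h : i.val = 0) : phi' φ i = A φ := by simp [phi', h]

lemma phi'_last {d : ℕ} (φ : Fin (2*d+1) → (Fin d → Fin 6)) (i : Fin (2*(d+1)+1))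
    (h : i.val = 2*d+2) : phi' φ i = B φ := by simp [phi', h]

lemma phi'_mid {d : ℕ} (φ : Fin (2*d+1) → (Fin d → Fin 6)) (i : Fin (2*(d+1)+1))
    (h1 : ¬ i.val = 0) (h2 : ¬ i.val = 2*d+2) : phi' φ i = U φ (mid i) := by
  simp [phi', h1, h2]

def W' {d : ℕ} (φ : Fin (2*d+1) → (Fin d → Fin 6))
    (W : ∀ i j : Fin (2*d+1), i < j → (Gd d).Walk (φ i) (φ j))
    (v' : Fin d → Fin 6) (hv : (Gd d).Adj (φ 0) v')
    (i j : Fin (2*(d+1)+1)) (h : i < j) : (Gd (d+1)).Walk (phi' φ i) (phi' φ j) :=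
  if hi : i.val = 0 then
    if hj : j.val = 2*d+2 then
      (wAB φ v' hv).copy (phi'_0 φ i hi).symm (phi'_last φ j hj).symm
    else
      (wAU φ W (mid j)).copy (phi'_0 φ i hi).symm
        (phi'_mid φ j (by have h' : (i:ℕ) < j := h; omega) hj).symm
  else if hj : j.val = 2*d+2 then
    (wUB φ W (mid i)).copy
      (phi'_mid φ i hi (by have h' : (i:ℕ) < j := h; have := j.isLt; omega)).symm
      (phi'_last φ j hj).symm
  else
    (wUU φ W (mid i) (mid j) (by
        have h' : (i:ℕ) < j := h
        have hi2 := i.isLt; have hj2 := j.isLt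
        simp only [mid, Fin.mk_lt_mk]
        omega)).copy
      (phi'_mid φ i hi (by have h' : (i:ℕ) < j := h; have := j.isLt; omega)).symm
      (phi'_mid φ j (by have h' : (i:ℕ) < j := h; omega) hj).symm

lemma step {d : ℕ} (h : Good d) : Good (d+1) := by
  obtain ⟨φ, W, hinj, hp, hd, v', hv, hvr⟩ := h
  have hv0 : φ 0 ≠ v' := fun hc => hvr (Set.mem_range.2 ⟨0, hc⟩)
  refine ⟨phi' φ, W' φ W v' hv, ?_, ?_, ?_, ?_⟩
  · -- injectivity
    intro a b hab
    have hba := a.isLt; have hbb := b.isLt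
    by_cases ha0 : a.val = 0 <;> by_cases hal : a.val = 2*d+2 <;>
      by_cases hb0 : b.val = 0 <;> by_cases hbl : b.val = 2*d+2 <;>
      first
      | exact Fin.ext (by omega)
      | (rw [phi'_0 φ a ha0, phi'_last φ b hbl] at hab
         simp only [A, B] at hab
         exact absurd (snoc_eq_snoc_iff.1 hab).2 (by decide))
      | (rw [phi'_0 φ a ha0, phi'_mid φ b hb0 hbl] at hab
         simp only [A, U] at hab
         exact absurd (snoc_eq_snoc_iff.1 hab).2 (by decide))
      | (rw [phi'_last φ a hal, phi'_0 φ b hb0] at hab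
         simp only [A, B] at hab
         exact absurd (snoc_eq_snoc_iff.1 hab).2 (by decide))
      | (rw [phi'_last φ a hal, phi'_mid φ b hb0 hbl] at hab
         simp only [B, U] at hab
         exact absurd (snoc_eq_snoc_iff.1 hab).2 (by decide))
      | (rw [phi'_mid φ a ha0 hal, phi'_0 φ b hb0] at hab
         simp only [A, U] at hab
         exact absurd (snoc_eq_snoc_iff.1 hab).2 (by decide))
      | (rw [phi'_mid φ a ha0 hal, phi'_last φ b hbl] at hab
         simp only [B, U] at hab
         exact absurd (snoc_eq_snoc_iff.1 hab).2 (by decide))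
      | (rw [phi'_mid φ a ha0 hal, phi'_mid φ b hb0 hbl] at hab
         simp only [U] at hab
         have h2 := congrArg Fin.val (hinj (snoc_eq_snoc_iff.1 hab).1)
         simp only [mid] at h2
         exact Fin.ext (by omega))
  · -- paths
    intro i j h
    unfold W'
    split
    · split
      · rw [Walk.isPath_copy]; exact path_wAB φ v' hv hv0
      · rw [Walk.isPath_copy]; exact path_wAU φ W hp _
    · split
      · rw [Walk.isPath_copy]; exact path_wUB φ W hp _
      · rw [Walk.isPath_copy]; exact path_wUU φ W hp _ _ _
  · -- disjointness
    intro i j k l hij hkl hne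
    have hij' : (i:ℕ) < j := hij
    have hkl' : (k:ℕ) < l := hkl
    have hjb := j.isLt; have hlb := l.isLt
    unfold W'
    split
    case isTrue hi0 =>
      split
      case isTrue hjl =>
        split
        case isTrue hk0 =>
          split
          case isTrue hll =>
            exact absurd ((by simp only [Prod.mk.injEq]; exact ⟨Fin.ext (by omega), Fin.ext (by omega)⟩ : (i,j) = (k,l))) hne
          case isFalse hll =>
            simp only [Walk.edges_copy]
            exact fun e he1 he2 => disj_AB_AU hvr _ e he1 he2
        case isFalse hk0 =>
          split
          case isTrue hll =>
            simp only [Walk.edges_copy]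
            exact fun e he1 he2 => disj_AB_UB hvr _ e he1 he2
          case isFalse hll =>
            simp only [Walk.edges_copy]
            exact fun e he1 he2 => disj_AB_UU _ _ _ e he1 he2
      case isFalse hjl =>
        split
        case isTrue hk0 =>
          split
          case isTrue hll =>
            simp only [Walk.edges_copy]
            exact fun e he1 he2 => disj_AB_AU hvr _ e he2 he1
          case isFalse hll =>
            simp only [Walk.edges_copy]
            refine fun e he1 he2 => disj_AU_AU hinj hd ?_ e he1 he2
            intro hc
            have hc' := congrArg Fin.val hc
            simp only [mid] at hc'
            exact hne ((by simp only [Prod.mk.injEq]; exact ⟨Fin.ext (by omega), Fin.ext (by omega)⟩ : (i,j) = (k,l)))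
        case isFalse hk0 =>
          split
          case isTrue hll =>
            simp only [Walk.edges_copy]
            exact fun e he1 he2 => disj_AU_UB _ _ e he1 he2
          case isFalse hll =>
            simp only [Walk.edges_copy]
            exact fun e he1 he2 => disj_AU_UU _ _ _ _ e he1 he2
    case isFalse hi0 =>
      split
      case isTrue hjl =>
        split
        case isTrue hk0 =>
          split
          case isTrue hll =>
            simp only [Walk.edges_copy]
            exact fun e he1 he2 => disj_AB_UB hvr _ e he2 he1
          case isFalse hll =>
            simp only [Walk.edges_copy]
            exact fun e he1 he2 => disj_AU_UB _ _ e he2 he1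
        case isFalse hk0 =>
          split
          case isTrue hll =>
            simp only [Walk.edges_copy]
            refine fun e he1 he2 => disj_UB_UB hinj hd ?_ e he1 he2
            intro hc
            have hc' := congrArg Fin.val hc
            simp only [mid] at hc'
            exact hne ((by simp only [Prod.mk.injEq]; exact ⟨Fin.ext (by omega), Fin.ext (by omega)⟩ : (i,j) = (k,l)))
          case isFalse hll =>
            simp only [Walk.edges_copy]
            exact fun e he1 he2 => disj_UB_UU _ _ _ _ e he1 he2
      case isFalse hjl =>
        split
        case isTrue hk0 =>
          split
          case isTrue hll =>
            simp only [Walk.edges_copy]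
            exact fun e he1 he2 => disj_AB_UU _ _ _ e he2 he1
          case isFalse hll =>
            simp only [Walk.edges_copy]
            exact fun e he1 he2 => disj_AU_UU _ _ _ _ e he2 he1
        case isFalse hk0 =>
          split
          case isTrue hll =>
            simp only [Walk.edges_copy]
            exact fun e he1 he2 => disj_UB_UU _ _ _ _ e he2 he1
          case isFalse hll =>
            simp only [Walk.edges_copy]
            refine fun e he1 he2 => disj_UU_UU hd _ _ ?_ e he1 he2
            intro hc
            rw [Prod.mk.injEq] at hc
            have hc1 := congrArg Fin.val hc.1
            have hc2 := congrArg Fin.val hc.2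
            simp only [mid] at hc1 hc2
            exact hne ((by simp only [Prod.mk.injEq]; exact ⟨Fin.ext (by omega), Fin.ext (by omega)⟩ : (i,j) = (k,l)))
  · -- special neighbor
    refine ⟨Fin.snoc (φ 0) 0, ?_, ?_⟩
    · rw [phi'_0 φ 0 rfl]
      exact adj_vert (φ 0) (padj 1 0 (by decide))
    · rintro ⟨i, hi⟩
      have hbi := i.isLt
      by_cases hi0 : i.val = 0
      · rw [phi'_0 φ i hi0] at hi
        simp only [A] at hi
        exact absurd (snoc_eq_snoc_iff.1 hi).2 (by decide)
      · by_cases hil : i.val = 2*d+2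
        · rw [phi'_last φ i hil] at hi
          simp only [B] at hi
          exact absurd (snoc_eq_snoc_iff.1 hi).2 (by decide)
        · rw [phi'_mid φ i hi0 hil] at hi
          simp only [U] at hi
          exact absurd (snoc_eq_snoc_iff.1 hi).2 (by decide)

instance : DecidableRel P6.Adj := fun a b =>
  decidable_of_iff _ (SimpleGraph.pathGraph_adj).symm

instance {d : ℕ} : DecidableRel (Gd d).Adj := fun x y =>
  inferInstanceAs (Decidable (∃ i, P6.Adj (x i) (y i) ∧ ∀ j, j ≠ i → x j = y j))

instance {α : Type*} [DecidableEq α] (l1 l2 : List α) : Decidable (l1.Disjoint l2) :=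
  decidable_of_iff (∀ a ∈ l1, a ∉ l2) Iff.rfl

def bφ : Fin 5 → (Fin 2 → Fin 6) := ![![1, 2], ![2, 1], ![3, 4], ![4, 3], ![2, 3]]

def w01 : (Gd 2).Walk (bφ 0) (bφ 1) :=
  Walk.cons (v := ![1, 1]) (by decide) (Walk.cons (v := ![2, 1]) (by decide) (Walk.nil))

def w02 : (Gd 2).Walk (bφ 0) (bφ 2) :=
  Walk.cons (v := ![0, 2]) (by decide) (Walk.cons (v := ![0, 3]) (by decide) (Walk.cons (v := ![1, 3]) (by decide) (Walk.cons (v := ![1, 4]) (by decide) (Walk.cons (v := ![2, 4]) (by decide) (Walk.cons (v := ![2, 5]) (by decide) (Walk.cons (v := ![3, 5]) (by decide) (Walk.cons (v := ![3, 4]) (by decide) (Walk.nil))))))))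

def w03 : (Gd 2).Walk (bφ 0) (bφ 3) :=
  Walk.cons (v := ![2, 2]) (by decide) (Walk.cons (v := ![3, 2]) (by decide) (Walk.cons (v := ![4, 2]) (by decide) (Walk.cons (v := ![5, 2]) (by decide) (Walk.cons (v := ![5, 3]) (by decide) (Walk.cons (v := ![4, 3]) (by decide) (Walk.nil))))))

def w04 : (Gd 2).Walk (bφ 0) (bφ 4) :=
  Walk.cons (v := ![1, 3]) (by decide) (Walk.cons (v := ![2, 3]) (by decide) (Walk.nil))

def w12 : (Gd 2).Walk (bφ 1) (bφ 2) :=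
  Walk.cons (v := ![2, 0]) (by decide) (Walk.cons (v := ![3, 0]) (by decide) (Walk.cons (v := ![3, 1]) (by decide) (Walk.cons (v := ![3, 2]) (by decide) (Walk.cons (v := ![3, 3]) (by decide) (Walk.cons (v := ![3, 4]) (by decide) (Walk.nil))))))

def w13 : (Gd 2).Walk (bφ 1) (bφ 3) :=
  Walk.cons (v := ![3, 1]) (by decide) (Walk.cons (v := ![4, 1]) (by decide) (Walk.cons (v := ![4, 2]) (by decide) (Walk.cons (v := ![4, 3]) (by decide) (Walk.nil))))

def w14 : (Gd 2).Walk (bφ 1) (bφ 4) :=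
  Walk.cons (v := ![2, 2]) (by decide) (Walk.cons (v := ![2, 3]) (by decide) (Walk.nil))

def w23 : (Gd 2).Walk (bφ 2) (bφ 3) :=
  Walk.cons (v := ![4, 4]) (by decide) (Walk.cons (v := ![4, 3]) (by decide) (Walk.nil))

def w24 : (Gd 2).Walk (bφ 2) (bφ 4) :=
  Walk.cons (v := ![2, 4]) (by decide) (Walk.cons (v := ![2, 3]) (by decide) (Walk.nil))

def w34 : (Gd 2).Walk (bφ 3) (bφ 4) :=
  Walk.cons (v := ![3, 3]) (by decide) (Walk.cons (v := ![2, 3]) (by decide) (Walk.nil))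

def bW : ∀ i j : Fin 5, (Gd 2).Walk (bφ i) (bφ j)
  | ⟨0,_⟩, ⟨0,_⟩ => Walk.nil
  | ⟨0,_⟩, ⟨1,_⟩ => w01
  | ⟨0,_⟩, ⟨2,_⟩ => w02
  | ⟨0,_⟩, ⟨3,_⟩ => w03
  | ⟨0,_⟩, ⟨4,_⟩ => w04
  | ⟨1,_⟩, ⟨0,_⟩ => (w01).reverse
  | ⟨1,_⟩, ⟨1,_⟩ => Walk.nil
  | ⟨1,_⟩, ⟨2,_⟩ => w12
  | ⟨1,_⟩, ⟨3,_⟩ => w13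
  | ⟨1,_⟩, ⟨4,_⟩ => w14
  | ⟨2,_⟩, ⟨0,_⟩ => (w02).reverse
  | ⟨2,_⟩, ⟨1,_⟩ => (w12).reverse
  | ⟨2,_⟩, ⟨2,_⟩ => Walk.nil
  | ⟨2,_⟩, ⟨3,_⟩ => w23
  | ⟨2,_⟩, ⟨4,_⟩ => w24
  | ⟨3,_⟩, ⟨0,_⟩ => (w03).reverse
  | ⟨3,_⟩, ⟨1,_⟩ => (w13).reverse
  | ⟨3,_⟩, ⟨2,_⟩ => (w23).reverse
  | ⟨3,_⟩, ⟨3,_⟩ => Walk.nil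
  | ⟨3,_⟩, ⟨4,_⟩ => w34
  | ⟨4,_⟩, ⟨0,_⟩ => (w04).reverse
  | ⟨4,_⟩, ⟨1,_⟩ => (w14).reverse
  | ⟨4,_⟩, ⟨2,_⟩ => (w24).reverse
  | ⟨4,_⟩, ⟨3,_⟩ => (w34).reverse
  | ⟨4,_⟩, ⟨4,_⟩ => Walk.nil

instance (priority := 2000) {V : Type*} [DecidableEq V] {G : SimpleGraph V} {u v : V}
    (p : G.Walk u v) : Decidable p.IsPath :=
  decidable_of_iff _ (SimpleGraph.Walk.isPath_def p).symm

lemma base_inj : Function.Injective bφ := by decide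

lemma base_path : ∀ i j : Fin 5, i < j → (bW i j).IsPath := by decide

lemma base_disj : ∀ i j k l : Fin 5, i < j → k < l → (i,(j:Fin 5)) ≠ (k,l) →
    List.Disjoint (bW i j).edges (bW k l).edges := by decide


lemma good_two : Good 2 := by
  refine ⟨bφ, fun i j _ => bW i j, base_inj, fun i j h => base_path i j h,
    fun i j k l hij hkl hne => base_disj i j k l hij hkl hne, ⟨![2,2], by decide, ?_⟩⟩
  rintro ⟨y, hy⟩
  exact absurd hy ((by decide : ∀ y : Fin 5, bφ y ≠ ![2,2]) y)

lemma good_all {d : ℕ} (hd : 2 ≤ d) : Good d := by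
  induction d with
  | zero => omega
  | succ k ih =>
    rcases Nat.lt_or_ge k 2 with h | h
    · have hk : k + 1 = 2 := by omega
      rw [hk]; exact good_two
    · exact step (ih h)

def castHom {n : ℕ} (hn : 6 ≤ n) (d : ℕ) : Gd d →g boxPow (SimpleGraph.pathGraph n) d where
  toFun x := fun i => Fin.castLE hn (x i)
  map_rel' := by
    rintro x y ⟨i, hadj, hoth⟩
    refine ⟨i, ?_, fun j hj => by simp only []; rw [hoth j hj]⟩
    rw [SimpleGraph.pathGraph_adj] at hadj ⊢
    simpa using hadj

lemma castHom_injective {n : ℕ} (hn : 6 ≤ n) (d : ℕ) :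
    Function.Injective (castHom hn d) :=
  fun x y h => funext fun i => Fin.castLE_injective hn (congrFun h i)

end Imm

theorem immersion_path_power (n d : ℕ) (hn : 6 ≤ n) (hd : 2 ≤ d) :
    immersionNumber (boxPow (SimpleGraph.pathGraph n) d) = 2 * d + 1 := by
  have g := Imm.good_all hd
  obtain ⟨φ, W, hinj, hp, hdj, -⟩ := g
  have h6 : HasCliqueImmersion (Imm.Gd d) (2*d+1) :=
    Imm.hasCliqueImmersion_of_partial φ hinj W hp hdj
  have himm : HasCliqueImmersion (boxPow (SimpleGraph.pathGraph n) d) (2*d+1) :=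
    Imm.hasCliqueImmersion_map (Imm.castHom hn d) (Imm.castHom_injective hn d) h6
  unfold immersionNumber
  apply le_antisymm
  · exact csSup_le ⟨0, Imm.hasCliqueImmersion_zero _⟩ (fun t ht => Imm.upper ht)
  · exact le_csSup ⟨2*d+1, fun t ht => Imm.upper ht⟩ himm
end
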